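/- Take m = n and l = 1, and let * be the associative product on k[Y_∞^{(n)}] determined by 1 * x = x = x * 1 and s * t = λ(s_1,…,s_{n−1}, s_n * t) + λ(s * t_1, t_2,…,t_n) for trees s = λ(s_1,…,s_n), t = λ(t_1,…,t_n). Define Δ : k[Y_∞^{(n)}] → k[Y_∞^{(n)}] ⊗ k[Y_∞^{(n)}] inductively by Δ(1) = 1 ⊗ 1 and, for a tree a = λ(a_1,…,a_n), Δ(a) = Σ (a_1' * a_2' * ⋯ * a_n') ⊗ λ(a_1'',…,a_n'') + a ⊗ 1, where Δ(a_i) = Σ a_i' ⊗ a_i'' in Sweedler notation; let ε be given by ε(1) = 1 and ε(T) = 0 for trees T ≠ 1. Then Δ is coassociative, ε is a counit for Δ, and Δ is an algebra homomorphism for *: Δ(a * b) = Δ(a) * Δ(b) (componentwise product on the tensor square) and Δ(1) = 1 ⊗ 1. Hence (k[Y_∞^{(n)}], *, 1, Δ, ε) is a bialgebra over k. -/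

import Mathlib

/- STATEMENT 14: for m = n and l = 1, the span of planar n-ary trees is a
bialgebra, with the product `*` and the coproduct
`Δ(λ(a₁,…,aₙ)) = Σ (a₁' * ⋯ * aₙ') ⊗ λ(a₁'',…,aₙ'') + a ⊗ 1`. -/


inductive NTree (n : ℕ) : Type
  | leaf : NTree n
  | node : (Fin n → NTree n) → NTree n

namespace NTree

/-- the degree: the number of applications of `λ` (internal vertices). -/
noncomputable def deg {n : ℕ} (t : NTree n) : ℕ :=
  NTree.rec (motive := fun _ => ℕ) 0 (fun _ ih => 1 + ∑ i, ih i) t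

theorem deg_node {n : ℕ} (f : Fin n → NTree n) : deg (node f) = 1 + ∑ i, deg (f i) := rfl

theorem deg_lt {n : ℕ} (f : Fin n → NTree n) (i : Fin n) : deg (f i) < deg (node f) := by
  have h : deg (f i) ≤ ∑ j, deg (f j) :=
    Finset.single_le_sum (f := fun j => deg (f j)) (fun j _ => Nat.zero_le _) (Finset.mem_univ i)
  rw [deg_node]; omega

end NTree

noncomputable section
open Finsupp

variable {K : Type*} [Field K] {n : ℕ}

/-- replace the `i`-th subtree of a node by each term of a linear combination. -/
def nodeAt (f : Fin n → NTree n) (i : Fin n) (x : NTree n →₀ K) : NTree n →₀ K :=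
  x.sum fun u c => Finsupp.single (NTree.node (Function.update f i u)) c

/-- the product on basis trees:
`1 * x = x = x * 1` and
`s * t = λ(s₁,…,sₘ*t,…,sₙ) + λ(t₁,…,s*t_l,…,tₙ)`. -/
def mulT (m l : Fin n) : NTree n → NTree n → (NTree n →₀ K)
  | .leaf, t => Finsupp.single t 1
  | .node f, .leaf => Finsupp.single (NTree.node f) 1
  | .node f, .node g =>
      nodeAt f m (mulT m l (f m) (.node g)) + nodeAt g l (mulT m l (.node f) (g l))
  termination_by s t => NTree.deg s + NTree.deg t
  decreasing_by
    · have := NTree.deg_lt f m; omega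
    · have := NTree.deg_lt g l; omega

def star (m l : Fin n) (x y : NTree n →₀ K) : NTree n →₀ K :=
  x.sum fun s a => y.sum fun t b => (a * b) • mulT m l s t
end

noncomputable section
open Finsupp

open scoped Classical

variable {K : Type*} [Field K] {n : ℕ}

/-- the index `m = n`. -/
def mTop (n : ℕ) [NeZero n] : Fin n := ⟨n - 1, by have := NeZero.pos n; omega⟩

/-- the index `l = 1`. -/
def lBot (n : ℕ) [NeZero n] : Fin n := ⟨0, NeZero.pos n⟩

variable [NeZero n]

/-- the iterated product `a₁ * a₂ * ⋯ * aₙ`. -/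
def bigStar (h : Fin n → NTree n) : NTree n →₀ K :=
  (List.finRange n).foldr
    (fun i acc => star (mTop n) (lBot n) (Finsupp.single (h i) 1) acc)
    (Finsupp.single NTree.leaf 1)

/-- the coproduct on basis trees (values in the free vector space on pairs
of trees, representing the tensor square): `Δ(1) = 1 ⊗ 1` and
`Δ(λ(a₁,…,aₙ)) = Σ (a₁' * ⋯ * aₙ') ⊗ λ(a₁'',…,aₙ'') + λ(a₁,…,aₙ) ⊗ 1`. -/
def deltaN : NTree n → ((NTree n × NTree n) →₀ K)
  | .leaf => Finsupp.single (NTree.leaf, NTree.leaf) 1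
  | .node f =>
      (∑ g ∈ Fintype.piFinset (fun i => (deltaN (f i)).support),
        (∏ i, (deltaN (f i)) (g i)) •
          ((bigStar fun i => (g i).1).sum fun u c =>
            Finsupp.single (u, NTree.node fun i => (g i).2) c))
        + Finsupp.single (NTree.node f, NTree.leaf) 1
  termination_by t => NTree.deg t
  decreasing_by all_goals (have := NTree.deg_lt f i; omega)

/-- `Δ ⊗ id` on the tensor square (free vector space on triples). -/
def expandL (x : (NTree n × NTree n) →₀ K) : (NTree n × NTree n × NTree n) →₀ K :=
  x.sum fun p c => (deltaN p.1).sum fun q d => Finsupp.single (q.1, q.2, p.2) (c * d)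

/-- `id ⊗ Δ` on the tensor square. -/
def expandR (x : (NTree n × NTree n) →₀ K) : (NTree n × NTree n × NTree n) →₀ K :=
  x.sum fun p c => (deltaN p.2).sum fun q d => Finsupp.single (p.1, q.1, q.2) (c * d)

def eps (t : NTree n) : K := if t = NTree.leaf then 1 else 0

/-- linear extension of the coproduct. -/
def deltaF : (NTree n →₀ K) →ₗ[K] ((NTree n × NTree n) →₀ K) :=
  Finsupp.lsum K fun t => LinearMap.toSpanSingleton K _ (deltaN t)

/-- componentwise product on the tensor square. -/
def starP (x y : (NTree n × NTree n) →₀ K) : (NTree n × NTree n) →₀ K :=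
  x.sum fun p a => y.sum fun q b =>
    (a * b) • ((mulT (mTop n) (lBot n) p.1 q.1).sum fun u cu =>
      (mulT (mTop n) (lBot n) p.2 q.2).sum fun w cw =>
        Finsupp.single (u, w) (cu * cw))

/-! ### Auxiliary development -/

section Aux1
open Finsupp

variable {K : Type*} [Field K] {n : ℕ}

theorem mulT_leaf_left (m l : Fin n) (t : NTree n) :
    mulT (K := K) m l NTree.leaf t = Finsupp.single t 1 := by
  rw [mulT]

theorem mulT_leaf_right (m l : Fin n) (s : NTree n) :
    mulT (K := K) m l s NTree.leaf = Finsupp.single s 1 := by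
  cases s <;> rw [mulT]

theorem mulT_node_node (m l : Fin n) (f g : Fin n → NTree n) :
    mulT (K := K) m l (.node f) (.node g)
      = nodeAt f m (mulT m l (f m) (.node g)) + nodeAt g l (mulT m l (.node f) (g l)) := by
  rw [mulT]

/-! nodeAt lemmas -/

theorem nodeAt_single (f : Fin n → NTree n) (i : Fin n) (u : NTree n) (c : K) :
    nodeAt f i (Finsupp.single u c) = Finsupp.single (NTree.node (Function.update f i u)) c := by
  rw [nodeAt, Finsupp.sum_single_index]; simp

theorem nodeAt_zero (f : Fin n → NTree n) (i : Fin n) :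
    nodeAt f i (0 : NTree n →₀ K) = 0 := by
  simp [nodeAt]

theorem nodeAt_add (f : Fin n → NTree n) (i : Fin n) (x y : NTree n →₀ K) :
    nodeAt f i (x + y) = nodeAt f i x + nodeAt f i y := by
  rw [nodeAt, nodeAt, nodeAt, Finsupp.sum_add_index] <;> simp [single_add]

theorem nodeAt_smul (f : Fin n → NTree n) (i : Fin n) (c : K) (x : NTree n →₀ K) :
    nodeAt f i (c • x) = c • nodeAt f i x := by
  rw [nodeAt, nodeAt, Finsupp.sum_smul_index (by simp), Finsupp.smul_sum]
  simp [Finsupp.smul_single]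

theorem nodeAt_update_same (f : Fin n → NTree n) (i : Fin n) (v : NTree n)
    (x : NTree n →₀ K) : nodeAt (Function.update f i v) i x = nodeAt f i x := by
  rw [nodeAt, nodeAt]
  exact Finsupp.sum_congr fun u _ => by rw [Function.update_idem]

/-! star lemmas -/

theorem star_zero_left (m l : Fin n) (y : NTree n →₀ K) : star m l 0 y = 0 := by
  simp [_root_.star]

theorem star_zero_right (m l : Fin n) (x : NTree n →₀ K) : star m l x 0 = 0 := by
  simp [_root_.star]

theorem star_single_left (m l : Fin n) (s : NTree n) (a : K) (y : NTree n →₀ K) :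
    star m l (Finsupp.single s a) y = y.sum fun t b => (a * b) • mulT m l s t := by
  rw [_root_.star, Finsupp.sum_single_index]; simp

theorem star_single_single (m l : Fin n) (s t : NTree n) (a b : K) :
    star m l (Finsupp.single s a) (Finsupp.single t b) = (a * b) • mulT m l s t := by
  rw [star_single_left, Finsupp.sum_single_index]; simp

theorem star_add_left (m l : Fin n) (x x' y : NTree n →₀ K) :
    star m l (x + x') y = star m l x y + star m l x' y := by
  rw [_root_.star, _root_.star, _root_.star, Finsupp.sum_add_index] <;>
    simp [add_mul, add_smul, Finsupp.sum_add]

theorem star_add_right (m l : Fin n) (x y y' : NTree n →₀ K) :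
    star m l x (y + y') = star m l x y + star m l x y' := by
  rw [_root_.star, _root_.star, _root_.star, ← Finsupp.sum_add]
  refine Finsupp.sum_congr fun s _ => ?_
  rw [Finsupp.sum_add_index] <;> simp [mul_add, add_smul]

theorem star_smul_left (m l : Fin n) (c : K) (x y : NTree n →₀ K) :
    star m l (c • x) y = c • star m l x y := by
  rw [_root_.star, _root_.star, Finsupp.sum_smul_index (by simp), Finsupp.smul_sum]
  refine Finsupp.sum_congr fun s _ => ?_
  rw [Finsupp.smul_sum]
  simp [mul_assoc, mul_smul]

theorem star_smul_right (m l : Fin n) (c : K) (x y : NTree n →₀ K) :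
    star m l x (c • y) = c • star m l x y := by
  rw [_root_.star, _root_.star, Finsupp.smul_sum]
  refine Finsupp.sum_congr fun s a => ?_
  rw [Finsupp.sum_smul_index (by simp), Finsupp.smul_sum]
  refine Finsupp.sum_congr fun t b => ?_
  rw [smul_smul]; ring_nf

theorem star_single_right (m l : Fin n) (x : NTree n →₀ K) (t : NTree n) (b : K) :
    star m l x (Finsupp.single t b) = x.sum fun s a => (a * b) • mulT m l s t := by
  rw [_root_.star]
  exact Finsupp.sum_congr fun s a => by rw [Finsupp.sum_single_index]; simp

theorem one_star (m l : Fin n) (x : NTree n →₀ K) :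
    star m l (Finsupp.single NTree.leaf 1) x = x := by
  rw [star_single_left]
  simp only [one_mul, mulT_leaf_left, Finsupp.smul_single, smul_eq_mul, mul_one]
  exact Finsupp.sum_single x

theorem tstar_one (m l : Fin n) (x : NTree n →₀ K) :
    star m l x (Finsupp.single NTree.leaf 1) = x := by
  rw [star_single_right]
  simp only [mul_one, mulT_leaf_right, Finsupp.smul_single, smul_eq_mul]
  exact Finsupp.sum_single x

end Aux1

section Aux2
open Finsupp

variable {K : Type*} [Field K] {n : ℕ}

/-- double graft, bilinear (used when `m ≠ l`). -/
def Bop (m l : Fin n) (p : Fin n → NTree n) (x y : NTree n →₀ K) : NTree n →₀ K :=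
  x.sum fun v c => y.sum fun w d =>
    Finsupp.single (NTree.node (Function.update (Function.update p m v) l w)) (c * d)

theorem Bop_single_single (m l : Fin n) (p : Fin n → NTree n) (v w : NTree n) (c d : K) :
    Bop m l p (Finsupp.single v c) (Finsupp.single w d)
      = Finsupp.single (NTree.node (Function.update (Function.update p m v) l w)) (c * d) := by
  rw [Bop, Finsupp.sum_single_index, Finsupp.sum_single_index] <;> simp

theorem Bop_zero_left (m l : Fin n) (p : Fin n → NTree n) (y : NTree n →₀ K) :
    Bop m l p 0 y = 0 := by simp [Bop]

theorem Bop_zero_right (m l : Fin n) (p : Fin n → NTree n) (x : NTree n →₀ K) :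
    Bop m l p x 0 = 0 := by simp [Bop]

theorem Bop_add_left (m l : Fin n) (p : Fin n → NTree n) (x x' y : NTree n →₀ K) :
    Bop m l p (x + x') y = Bop m l p x y + Bop m l p x' y := by
  rw [Bop, Bop, Bop, Finsupp.sum_add_index] <;> simp [add_mul, single_add, Finsupp.sum_add]

theorem Bop_add_right (m l : Fin n) (p : Fin n → NTree n) (x y y' : NTree n →₀ K) :
    Bop m l p x (y + y') = Bop m l p x y + Bop m l p x y' := by
  rw [Bop, Bop, Bop, ← Finsupp.sum_add]
  refine Finsupp.sum_congr fun v _ => ?_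
  rw [Finsupp.sum_add_index] <;> simp [mul_add, single_add]

theorem Bop_smul_left (m l : Fin n) (p : Fin n → NTree n) (c : K) (x y : NTree n →₀ K) :
    Bop m l p (c • x) y = c • Bop m l p x y := by
  rw [Bop, Bop, Finsupp.sum_smul_index (by simp), Finsupp.smul_sum]
  refine Finsupp.sum_congr fun v _ => ?_
  rw [Finsupp.smul_sum]
  refine Finsupp.sum_congr fun w _ => ?_
  rw [Finsupp.smul_single]
  congr 1
  rw [smul_eq_mul]; ring

theorem Bop_smul_right (m l : Fin n) (p : Fin n → NTree n) (c : K) (x y : NTree n →₀ K) :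
    Bop m l p x (c • y) = c • Bop m l p x y := by
  rw [Bop, Bop, Finsupp.smul_sum]
  refine Finsupp.sum_congr fun v a => ?_
  rw [Finsupp.sum_smul_index (by simp), Finsupp.smul_sum]
  refine Finsupp.sum_congr fun w b => ?_
  rw [Finsupp.smul_single]
  congr 1
  rw [smul_eq_mul]; ring

theorem nodeAt_eq_Bop_m {m l : Fin n} (hml : m ≠ l) (p : Fin n → NTree n)
    (x : NTree n →₀ K) : nodeAt p m x = Bop m l p x (Finsupp.single (p l) 1) := by
  induction x using Finsupp.induction_linear with
  | zero => simp [nodeAt_zero, Bop_zero_left]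
  | add f g hf hg => rw [nodeAt_add, Bop_add_left, hf, hg]
  | single v c =>
      rw [nodeAt_single, Bop_single_single, mul_one]
      congr 1
      conv_lhs => rw [← Function.update_eq_self l (Function.update p m v)]
      rw [Function.update_of_ne (Ne.symm hml)]

theorem nodeAt_eq_Bop_l {m l : Fin n} (hml : m ≠ l) (q : Fin n → NTree n)
    (y : NTree n →₀ K) : nodeAt q l y = Bop m l q (Finsupp.single (q m) 1) y := by
  induction y using Finsupp.induction_linear with
  | zero => simp [nodeAt_zero, Bop_zero_right]
  | add f g hf hg => rw [nodeAt_add, Bop_add_right, hf, hg]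
  | single w d =>
      rw [nodeAt_single, Bop_single_single, one_mul, Function.update_eq_self]

theorem nodeAt_Bop_aux_m {m l : Fin n} (hml : m ≠ l) (p : Fin n → NTree n)
    (v w : NTree n) (z : NTree n →₀ K) :
    nodeAt (Function.update (Function.update p m v) l w) m z
      = Bop m l p z (Finsupp.single w 1) := by
  induction z using Finsupp.induction_linear with
  | zero => simp [nodeAt_zero, Bop_zero_left]
  | add f g hf hg => rw [nodeAt_add, Bop_add_left, hf, hg]
  | single a c =>
      rw [nodeAt_single, Bop_single_single, mul_one]
      congr 2
      rw [Function.update_comm (Ne.symm hml), Function.update_idem,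
        Function.update_comm hml]

theorem nodeAt_Bop_aux_l {m l : Fin n} (q : Fin n → NTree n)
    (z w : NTree n) (y : NTree n →₀ K) :
    nodeAt (Function.update (Function.update q m z) l w) l y
      = Bop m l q (Finsupp.single z 1) y := by
  induction y using Finsupp.induction_linear with
  | zero => simp [nodeAt_zero, Bop_zero_right]
  | add f g hf hg => rw [nodeAt_add, Bop_add_right, hf, hg]
  | single a c =>
      rw [nodeAt_single, Bop_single_single, one_mul, Function.update_idem]

theorem single_eq_smul_one (a : NTree n) (c : K) :
    (Finsupp.single a c : NTree n →₀ K) = c • Finsupp.single a 1 := by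
  rw [Finsupp.smul_single, smul_eq_mul, mul_one]

theorem B_left_single {m l : Fin n} (hml : m ≠ l) (p h : Fin n → NTree n)
    (v w : NTree n) :
    star m l (Bop m l p (Finsupp.single v (1:K)) (Finsupp.single w 1))
        (Finsupp.single (NTree.node h) 1)
      = Bop m l p (star m l (Finsupp.single v 1) (Finsupp.single (NTree.node h) 1))
          (Finsupp.single w 1)
        + Bop m l h (Finsupp.single (h m) 1)
            (star m l (Bop m l p (Finsupp.single v 1) (Finsupp.single w 1))
              (Finsupp.single (h l) 1)) := by
  rw [Bop_single_single, mul_one, star_single_single, mul_one, mulT_node_node]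
  have hPm : (Function.update (Function.update p m v) l w) m = v := by
    rw [Function.update_of_ne hml, Function.update_self]
  rw [hPm, one_smul, nodeAt_Bop_aux_m hml, nodeAt_eq_Bop_l hml h,
    star_single_single, mul_one, one_smul, star_single_single, mul_one, one_smul]

theorem B_left {m l : Fin n} (hml : m ≠ l) (p h : Fin n → NTree n)
    (x y : NTree n →₀ K) :
    star m l (Bop m l p x y) (Finsupp.single (NTree.node h) 1)
      = Bop m l p (star m l x (Finsupp.single (NTree.node h) 1)) y
        + Bop m l h (Finsupp.single (h m) 1)
            (star m l (Bop m l p x y) (Finsupp.single (h l) 1)) := by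
  induction x using Finsupp.induction_linear with
  | zero => simp [Bop_zero_left, Bop_zero_right, star_zero_left, star_zero_right]
  | add f g hf hg =>
      simp only [Bop_add_left, Bop_add_right, star_add_left, star_add_right, hf, hg]
      abel
  | single v c =>
    induction y using Finsupp.induction_linear with
    | zero => simp [Bop_zero_left, Bop_zero_right, star_zero_left, star_zero_right]
    | add f g hf hg =>
        simp only [Bop_add_left, Bop_add_right, star_add_left, star_add_right, hf, hg]
        abel
    | single w d =>
        rw [single_eq_smul_one v c, single_eq_smul_one w d]
        simp only [Bop_smul_left, Bop_smul_right, star_smul_left, star_smul_right,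
          B_left_single hml p h v w]
        module

theorem B_right_single {m l : Fin n} (hml : m ≠ l) (f q : Fin n → NTree n)
    (z w : NTree n) :
    star m l (Finsupp.single (NTree.node f) 1)
        (Bop m l q (Finsupp.single z (1:K)) (Finsupp.single w 1))
      = Bop m l f
          (star m l (Finsupp.single (f m) 1)
            (Bop m l q (Finsupp.single z 1) (Finsupp.single w 1)))
          (Finsupp.single (f l) 1)
        + Bop m l q (Finsupp.single z 1)
            (star m l (Finsupp.single (NTree.node f) 1) (Finsupp.single w 1)) := by
  rw [Bop_single_single, mul_one, star_single_single, one_mul, mulT_node_node]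
  have hGl : (Function.update (Function.update q m z) l w) l = w := Function.update_self _ _ _
  rw [hGl, one_smul, nodeAt_eq_Bop_m hml f, nodeAt_Bop_aux_l q,
    star_single_single, one_mul, one_smul, star_single_single, one_mul, one_smul]

theorem B_right {m l : Fin n} (hml : m ≠ l) (f q : Fin n → NTree n)
    (x y : NTree n →₀ K) :
    star m l (Finsupp.single (NTree.node f) 1) (Bop m l q x y)
      = Bop m l f (star m l (Finsupp.single (f m) 1) (Bop m l q x y))
          (Finsupp.single (f l) 1)
        + Bop m l q x (star m l (Finsupp.single (NTree.node f) 1) y) := by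
  induction x using Finsupp.induction_linear with
  | zero => simp [Bop_zero_left, Bop_zero_right, star_zero_left, star_zero_right]
  | add a b ha hb =>
      simp only [Bop_add_left, Bop_add_right, star_add_left, star_add_right, ha, hb]
      abel
  | single z e =>
    induction y using Finsupp.induction_linear with
    | zero => simp [Bop_zero_left, Bop_zero_right, star_zero_left, star_zero_right]
    | add a b ha hb =>
        simp only [Bop_add_left, Bop_add_right, star_add_left, star_add_right, ha, hb]
        abel
    | single w d =>
        rw [single_eq_smul_one z e, single_eq_smul_one w d]
        simp only [Bop_smul_left, Bop_smul_right, star_smul_left, star_smul_right,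
          B_right_single hml f q z w]
        module
end Aux2

section Aux3
open Finsupp

variable {K : Type*} [Field K] {n : ℕ}

theorem NA_left_single (j : Fin n) (p h : Fin n → NTree n) (v : NTree n) :
    star j j (nodeAt p j (Finsupp.single v (1:K))) (Finsupp.single (NTree.node h) 1)
      = nodeAt p j (star j j (Finsupp.single v 1) (Finsupp.single (NTree.node h) 1))
        + nodeAt h j (star j j (nodeAt p j (Finsupp.single v 1))
            (Finsupp.single (h j) 1)) := by
  rw [nodeAt_single, star_single_single, mul_one, one_smul, mulT_node_node,
    Function.update_self, nodeAt_update_same, star_single_single, mul_one, one_smul,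
    star_single_single, mul_one, one_smul]

theorem NA_left (j : Fin n) (p h : Fin n → NTree n) (x : NTree n →₀ K) :
    star j j (nodeAt p j x) (Finsupp.single (NTree.node h) 1)
      = nodeAt p j (star j j x (Finsupp.single (NTree.node h) 1))
        + nodeAt h j (star j j (nodeAt p j x) (Finsupp.single (h j) 1)) := by
  induction x using Finsupp.induction_linear with
  | zero => simp [nodeAt_zero, star_zero_left]
  | add f g hf hg =>
      simp only [nodeAt_add, star_add_left, hf, hg]
      abel
  | single v c =>
      rw [single_eq_smul_one v c]
      simp only [nodeAt_smul, star_smul_left, NA_left_single j p h v]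
      module

theorem NA_right_single (j : Fin n) (f q : Fin n → NTree n) (w : NTree n) :
    star j j (Finsupp.single (NTree.node f) (1:K)) (nodeAt q j (Finsupp.single w 1))
      = nodeAt f j (star j j (Finsupp.single (f j) 1) (nodeAt q j (Finsupp.single w 1)))
        + nodeAt q j (star j j (Finsupp.single (NTree.node f) 1) (Finsupp.single w 1)) := by
  rw [nodeAt_single, star_single_single, one_mul, one_smul, mulT_node_node,
    Function.update_self, nodeAt_update_same, star_single_single, one_mul, one_smul,
    star_single_single, one_mul, one_smul]

theorem NA_right (j : Fin n) (f q : Fin n → NTree n) (y : NTree n →₀ K) :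
    star j j (Finsupp.single (NTree.node f) 1) (nodeAt q j y)
      = nodeAt f j (star j j (Finsupp.single (f j) 1) (nodeAt q j y))
        + nodeAt q j (star j j (Finsupp.single (NTree.node f) 1) y) := by
  induction y using Finsupp.induction_linear with
  | zero => simp [nodeAt_zero, star_zero_right]
  | add f g hf hg =>
      simp only [nodeAt_add, star_add_right, hf, hg]
      abel
  | single w c =>
      rw [single_eq_smul_one w c]
      simp only [nodeAt_smul, star_smul_left, star_smul_right, NA_right_single j f q w]
      module

theorem mulT_assoc (m l : Fin n) (s t u : NTree n) :
    star m l (mulT m l s t) (Finsupp.single u (1:K))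
      = star m l (Finsupp.single s 1) (mulT m l t u) := by
  generalize hN : s.deg + t.deg + u.deg = N
  induction N using Nat.strong_induction_on generalizing s t u with
  | _ N IH =>
  cases s with
  | leaf => simp [mulT_leaf_left, one_star, star_single_single]
  | node f =>
    cases t with
    | leaf => rw [mulT_leaf_right, mulT_leaf_left]
    | node g =>
      cases u with
      | leaf =>
          simp [mulT_leaf_right, tstar_one, star_single_single]
      | node h =>
        have IH1 : star m l (mulT m l (f m) (.node g)) (Finsupp.single (.node h) (1:K))
            = star m l (Finsupp.single (f m) 1) (mulT m l (.node g) (.node h)) := by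
          refine IH _ ?_ _ _ _ rfl
          subst hN
          have := NTree.deg_lt f m
          omega
        have IH2 : star m l (mulT m l (.node f) (g l)) (Finsupp.single (.node h) (1:K))
            = star m l (Finsupp.single (NTree.node f) 1) (mulT m l (g l) (.node h)) := by
          refine IH _ ?_ _ _ _ rfl
          subst hN
          have := NTree.deg_lt g l
          omega
        have IH3 : star m l (mulT m l (.node f) (.node g)) (Finsupp.single (h l) (1:K))
            = star m l (Finsupp.single (NTree.node f) 1) (mulT m l (.node g) (h l)) := by
          refine IH _ ?_ _ _ _ rfl
          subst hN
          have := NTree.deg_lt h l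
          omega
        by_cases hml : m = l
        · subst hml
          rw [mulT_node_node m m f g, star_add_left, NA_left, NA_left,
            mulT_node_node m m g h, star_add_right, NA_right, NA_right,
            IH1, IH2, ← IH3,
            mulT_node_node m m g h, star_add_right, nodeAt_add,
            mulT_node_node m m f g, star_add_left, nodeAt_add]
          abel
        · rw [mulT_node_node m l f g, star_add_left,
            nodeAt_eq_Bop_m hml f, nodeAt_eq_Bop_l hml g,
            B_left hml, B_left hml,
            mulT_node_node m l g h, star_add_right,
            nodeAt_eq_Bop_m hml g, nodeAt_eq_Bop_l hml h,
            B_right hml, B_right hml,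
            IH1, ← IH3,
            mulT_node_node m l g h, star_add_right,
            nodeAt_eq_Bop_m hml g, nodeAt_eq_Bop_l hml h, Bop_add_left,
            mulT_node_node m l f g, star_add_left,
            nodeAt_eq_Bop_m hml f, nodeAt_eq_Bop_l hml g, Bop_add_right]
          simp only [star_single_single, one_mul, one_smul]
          abel
end Aux3

section Aux4
open Finsupp

variable {K : Type*} [Field K] {n : ℕ}

theorem star_assoc (m l : Fin n) (x y z : NTree n →₀ K) :
    star m l (star m l x y) z = star m l x (star m l y z) := by
  induction x using Finsupp.induction_linear with
  | zero => simp [star_zero_left]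
  | add a b ha hb => simp only [star_add_left, ha, hb]
  | single s a =>
    induction y using Finsupp.induction_linear with
    | zero => simp [star_zero_left, star_zero_right]
    | add c d hc hd => simp only [star_add_left, star_add_right, hc, hd]
    | single t b =>
      induction z using Finsupp.induction_linear with
      | zero => simp [star_zero_right]
      | add c d hc hd => simp only [star_add_right, hc, hd]
      | single u c =>
        rw [single_eq_smul_one s a, single_eq_smul_one t b, single_eq_smul_one u c]
        simp only [star_smul_left, star_smul_right]
        rw [star_single_single, one_mul, one_smul, mulT_assoc,
          star_single_single, one_mul, one_smul]
end Aux4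

section Mlift
open Finsupp

variable {K : Type*} [Field K] {n : ℕ} {α β : Type*}
variable {M : Type*} [AddCommMonoid M] [Module K M]

/-- multilinear extension of `Φ` along finitely supported coefficients. -/
def mlift (Φ : (Fin n → α) → M) (y : Fin n → (α →₀ K)) : M :=
  ∑ g ∈ Fintype.piFinset (fun i => (y i).support), (∏ i, y i (g i)) • Φ g

theorem mlift_congrΦ {Φ Φ' : (Fin n → α) → M} (y : Fin n → (α →₀ K))
    (h : ∀ g, Φ g = Φ' g) : mlift Φ y = mlift Φ' y := by
  unfold mlift; exact Finset.sum_congr rfl fun g _ => by rw [h]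

/-- extend the sum to any superset of the support. -/
theorem mlift_eq_sum_subset (Φ : (Fin n → α) → M) (y : Fin n → (α →₀ K))
    (S : Fin n → Finset α) (hS : ∀ i, (y i).support ⊆ S i) :
    mlift Φ y = ∑ g ∈ Fintype.piFinset S, (∏ i, y i (g i)) • Φ g := by
  unfold mlift
  refine Finset.sum_subset ?_ ?_
  · intro g hg
    rw [Fintype.mem_piFinset] at hg ⊢
    exact fun i => hS i (hg i)
  · intro g _ hg
    rw [Fintype.mem_piFinset] at hg
    push_neg at hg
    obtain ⟨i, hi⟩ := hg
    have hz : (∏ i, (y i) (g i)) = 0 :=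
      Finset.prod_eq_zero (Finset.mem_univ i) (Finsupp.notMem_support_iff.mp hi)
    rw [hz, zero_smul]

theorem prod_update_apply (y : Fin n → (α →₀ K)) (j : Fin n) (w : α →₀ K)
    (g : Fin n → α) :
    (∏ i, (Function.update y j w i) (g i))
      = w (g j) * ∏ i ∈ Finset.univ.erase j, (y i) (g i) := by
  rw [← Finset.mul_prod_erase _ _ (Finset.mem_univ j), Function.update_self]
  congr 1
  exact Finset.prod_congr rfl fun i hi => by
    rw [Function.update_of_ne (Finset.ne_of_mem_erase hi)]

theorem mlift_single (Φ : (Fin n → α) → M) (t : Fin n → α) :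
    mlift Φ (fun i => Finsupp.single (t i) (1:K)) = Φ t := by
  rw [mlift_eq_sum_subset Φ _ (fun i => {t i}) (fun i => Finsupp.support_single_subset),
    Fintype.piFinset_singleton, Finset.sum_singleton]
  simp

theorem mlift_slot_zero (Φ : (Fin n → α) → M) (y : Fin n → (α →₀ K)) (j : Fin n)
    (h : y j = 0) : mlift Φ y = 0 := by
  unfold mlift
  refine Finset.sum_eq_zero fun g _ => ?_
  have : (∏ i, (y i) (g i)) = 0 :=
    Finset.prod_eq_zero (Finset.mem_univ j) (by rw [h]; rfl)
  rw [this, zero_smul]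

theorem mlift_slot_add (Φ : (Fin n → α) → M) (y : Fin n → (α →₀ K)) (j : Fin n)
    (x x' : α →₀ K) :
    mlift Φ (Function.update y j (x + x'))
      = mlift Φ (Function.update y j x) + mlift Φ (Function.update y j x') := by
  classical
  set S : Fin n → Finset α := fun i =>
    if i = j then x.support ∪ x'.support ∪ (x + x').support else (y i).support with hSdef
  have hsub : ∀ (w : α →₀ K), w.support ⊆ x.support ∪ x'.support ∪ (x + x').support →
      ∀ i, ((Function.update y j w i).support : Finset α) ⊆ S i := by
    intro w hw i
    by_cases hij : i = j
    · subst hij; rw [Function.update_self, hSdef]; simpa using hw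
    · rw [Function.update_of_ne hij, hSdef]; simp [hij]
  rw [mlift_eq_sum_subset Φ _ S (hsub _ (fun a ha => by simp [ha])),
    mlift_eq_sum_subset Φ _ S (hsub _ (fun a ha => by simp [ha])),
    mlift_eq_sum_subset Φ _ S (hsub _ (fun a ha => by simp [ha])),
    ← Finset.sum_add_distrib]
  refine Finset.sum_congr rfl fun g _ => ?_
  rw [← add_smul]
  congr 1
  rw [prod_update_apply, prod_update_apply, prod_update_apply, Finsupp.add_apply,
    add_mul]

theorem mlift_slot_smul (Φ : (Fin n → α) → M) (y : Fin n → (α →₀ K)) (j : Fin n)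
    (c : K) (x : α →₀ K) :
    mlift Φ (Function.update y j (c • x)) = c • mlift Φ (Function.update y j x) := by
  classical
  by_cases hc : c = 0
  · subst hc
    rw [zero_smul, zero_smul, mlift_slot_zero Φ _ j (Function.update_self _ _ _)]
  set S : Fin n → Finset α := fun i => if i = j then x.support else (y i).support
    with hSdef
  have hsub : ∀ (w : α →₀ K), w.support ⊆ x.support →
      ∀ i, ((Function.update y j w i).support : Finset α) ⊆ S i := by
    intro w hw i
    by_cases hij : i = j
    · subst hij; rw [Function.update_self, hSdef]; simpa using hw
    · rw [Function.update_of_ne hij, hSdef]; simp [hij]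
  rw [mlift_eq_sum_subset Φ _ S (hsub _ (by rw [Finsupp.support_smul_eq hc])),
    mlift_eq_sum_subset Φ _ S (hsub _ (fun a ha => ha)), Finset.smul_sum]
  refine Finset.sum_congr rfl fun g _ => ?_
  rw [prod_update_apply, prod_update_apply, smul_smul, Finsupp.smul_apply,
    smul_eq_mul, mul_assoc]

theorem mlift_slot_single (Φ : (Fin n → α) → M) (y : Fin n → (α →₀ K)) (j : Fin n)
    (a : α) (c : K) :
    mlift Φ (Function.update y j (Finsupp.single a c))
      = c • mlift Φ (Function.update y j (Finsupp.single a 1)) := by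
  have : (Finsupp.single a c : α →₀ K) = c • Finsupp.single a 1 := by
    rw [Finsupp.smul_single, smul_eq_mul, mul_one]
  rw [this, mlift_slot_smul]

/-- slot expansion -/
theorem mlift_slot_sum (Φ : (Fin n → α) → M) (y : Fin n → (α →₀ K)) (j : Fin n)
    (x : α →₀ K) :
    mlift Φ (Function.update y j x)
      = x.sum fun a c => c • mlift Φ (Function.update y j (Finsupp.single a 1)) := by
  induction x using Finsupp.induction_linear with
  | zero => rw [Finsupp.sum_zero_index, mlift_slot_zero Φ _ j (Function.update_self _ _ _)]
  | add f g hf hg =>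
      rw [mlift_slot_add, hf, hg, Finsupp.sum_add_index]
      · simp
      · intro a _ c d; rw [add_smul]
  | single a c =>
      rw [mlift_slot_single, Finsupp.sum_single_index (by rw [zero_smul])]

theorem mlift_expand_slot (Φ : (Fin n → α) → M) (y : Fin n → (α →₀ K)) (j : Fin n) :
    mlift Φ y
      = (y j).sum fun a c => c • mlift Φ (Function.update y j (Finsupp.single a 1)) := by
  conv_lhs => rw [← Function.update_eq_self j y]
  rw [mlift_slot_sum]

/-- push an additive `K`-linear operation inside `mlift`. -/
theorem mlift_map {M' : Type*} [AddCommMonoid M'] [Module K M'] (L : M →ₗ[K] M')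
    (Φ : (Fin n → α) → M) (y : Fin n → (α →₀ K)) :
    L (mlift Φ y) = mlift (fun g => L (Φ g)) y := by
  unfold mlift
  rw [map_sum]
  exact Finset.sum_congr rfl fun g _ => by rw [map_smul]

end Mlift

section MlinExt
open Finsupp

variable {K : Type*} [Field K] {n : ℕ} {α β : Type*}
variable {M : Type*} [AddCommMonoid M] [Module K M]

theorem update_apply_comp (G : Fin n → (α →₀ K) → (β →₀ K)) (y : Fin n → α →₀ K)
    (j : Fin n) (x : α →₀ K) :
    (fun i => G i (Function.update y j x i))
      = Function.update (fun i => G i (y i)) j (G j x) := by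
  funext i
  by_cases h : i = j
  · subst h; rw [Function.update_self, Function.update_self]
  · rw [Function.update_of_ne h, Function.update_of_ne h]

/-- two slot-wise linear maps agreeing on families of singles are equal. -/
theorem multilinear_ext {H₁ H₂ : (Fin n → (α →₀ K)) → M}
    (h1a : ∀ y j x x', H₁ (Function.update y j (x + x'))
        = H₁ (Function.update y j x) + H₁ (Function.update y j x'))
    (h1s : ∀ y j (c : K) x, H₁ (Function.update y j (c • x))
        = c • H₁ (Function.update y j x))
    (h2a : ∀ y j x x', H₂ (Function.update y j (x + x'))
        = H₂ (Function.update y j x) + H₂ (Function.update y j x'))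
    (h2s : ∀ y j (c : K) x, H₂ (Function.update y j (c • x))
        = c • H₂ (Function.update y j x))
    (hs : ∀ t : Fin n → α, H₁ (fun i => Finsupp.single (t i) 1)
        = H₂ (fun i => Finsupp.single (t i) 1)) :
    ∀ y, H₁ y = H₂ y := by
  suffices h : ∀ k : ℕ, ∀ y : Fin n → (α →₀ K),
      (∀ i : Fin n, k ≤ (i : ℕ) → ∃ a, y i = Finsupp.single a (1:K)) → H₁ y = H₂ y by
    intro y
    exact h n y (fun i hi => absurd i.isLt (by omega))
  intro k
  induction k with
  | zero =>
      intro y hy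
      choose t ht using fun i => hy i (Nat.zero_le _)
      have : y = fun i => Finsupp.single (t i) (1:K) := funext fun i => ht i
      rw [this]; exact hs t
  | succ k IHk =>
      intro y hy
      by_cases hk : k < n
      · set j : Fin n := ⟨k, hk⟩ with hj
        have hupd : y = Function.update y j (y j) := by
          rw [Function.update_eq_self]
        rw [hupd]
        generalize y j = x
        induction x using Finsupp.induction_linear with
        | zero =>
            have z1 : H₁ (Function.update y j 0) = 0 := by
              have := h1s y j 0 0
              rwa [zero_smul, zero_smul] at this
            have z2 : H₂ (Function.update y j 0) = 0 := by
              have := h2s y j 0 0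
              rwa [zero_smul, zero_smul] at this
            rw [z1, z2]
        | add f g hf hg => rw [h1a, h2a, hf, hg]
        | single a c =>
            have e : (Finsupp.single a c : α →₀ K) = c • Finsupp.single a 1 := by
              rw [Finsupp.smul_single, smul_eq_mul, mul_one]
            rw [e, h1s, h2s]
            congr 1
            refine IHk _ fun i hi => ?_
            by_cases hij : i = j
            · subst hij; rw [Function.update_self]; exact ⟨a, rfl⟩
            · rw [Function.update_of_ne hij]
              refine hy i ?_
              have : (i : ℕ) ≠ k := fun h => hij (Fin.ext h)
              omega
      · exact IHk y fun i hi => hy i (by omega)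

theorem mlift_swap {γ : Type*} (Ψ : (Fin n → α) → γ → M) (y : Fin n → (α →₀ K))
    (x : γ →₀ K) :
    mlift (fun g => x.sum fun u d => d • Ψ g u) y
      = x.sum fun u d => d • mlift (fun g => Ψ g u) y := by
  unfold mlift
  simp only [Finsupp.sum, Finset.smul_sum]
  rw [Finset.sum_comm]
  refine Finset.sum_congr rfl fun u _ => Finset.sum_congr rfl fun g _ => ?_
  rw [smul_comm]

/-- multilinear substitution: composing `mlift` with a linear substitution. -/
theorem mlift_comp (Φ : (Fin n → β) → M) (r : Fin n → α → (β →₀ K))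
    (y : Fin n → (α →₀ K)) :
    mlift Φ (fun i => Finsupp.linearCombination K (r i) (y i))
      = mlift (fun g => mlift Φ (fun i => r i (g i))) y := by
  refine multilinear_ext (H₁ := fun y => mlift Φ (fun i => Finsupp.linearCombination K (r i) (y i)))
    (H₂ := fun y => mlift (fun g => mlift Φ (fun i => r i (g i))) y)
    ?_ ?_ ?_ ?_ ?_ y
  · intro y j x x'
    rw [update_apply_comp (fun i z => Finsupp.linearCombination K (r i) z), map_add,
      mlift_slot_add]
    rw [update_apply_comp (fun i z => Finsupp.linearCombination K (r i) z),
      update_apply_comp (fun i z => Finsupp.linearCombination K (r i) z)]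
  · intro y j c x
    rw [update_apply_comp (fun i z => Finsupp.linearCombination K (r i) z), map_smul,
      mlift_slot_smul, update_apply_comp (fun i z => Finsupp.linearCombination K (r i) z)]
  · intro y j x x'; exact mlift_slot_add _ y j x x'
  · intro y j c x; exact mlift_slot_smul _ y j c x
  · intro t
    dsimp only
    rw [mlift_single]
    congr 1
    funext i
    rw [Finsupp.linearCombination_single, one_smul]

end MlinExt

section ChainBS
open Finsupp

variable {K : Type*} [Field K] {n : ℕ}

def chainS (m l : Fin n) (x : Fin n → NTree n →₀ K) :
    List (Fin n) → (NTree n →₀ K) → NTree n →₀ K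
  | [], z => z
  | i :: L, z => star m l (x i) (chainS m l x L z)

@[simp] theorem chainS_nil (m l : Fin n) (x : Fin n → NTree n →₀ K) (z : NTree n →₀ K) :
    chainS m l x [] z = z := rfl

@[simp] theorem chainS_cons (m l : Fin n) (x : Fin n → NTree n →₀ K) (i : Fin n)
    (L : List (Fin n)) (z : NTree n →₀ K) :
    chainS m l x (i :: L) z = star m l (x i) (chainS m l x L z) := rfl

theorem chainS_eq_foldr (m l : Fin n) (x : Fin n → NTree n →₀ K) (L : List (Fin n))
    (z : NTree n →₀ K) :
    chainS m l x L z = L.foldr (fun i acc => star m l (x i) acc) z := by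
  induction L with
  | nil => rfl
  | cons i L ih => rw [chainS_cons, ih, List.foldr_cons]

theorem chainS_append (m l : Fin n) (x : Fin n → NTree n →₀ K) (L₁ L₂ : List (Fin n))
    (z : NTree n →₀ K) :
    chainS m l x (L₁ ++ L₂) z = chainS m l x L₁ (chainS m l x L₂ z) := by
  induction L₁ with
  | nil => rfl
  | cons i L ih => rw [List.cons_append, chainS_cons, chainS_cons, ih]

theorem chainS_update_not_mem (m l : Fin n) {j : Fin n} {L : List (Fin n)} (h : j ∉ L)
    (x : Fin n → NTree n →₀ K) (w z : NTree n →₀ K) :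
    chainS m l (Function.update x j w) L z = chainS m l x L z := by
  induction L with
  | nil => rfl
  | cons i L ih =>
      rw [chainS_cons, chainS_cons, Function.update_of_ne (by rintro rfl; exact h (by simp)),
        ih (fun hm => h (List.mem_cons_of_mem _ hm))]

theorem chainS_star_out (m l : Fin n) (x : Fin n → NTree n →₀ K) (L : List (Fin n))
    (z w : NTree n →₀ K) :
    star m l (chainS m l x L z) w = chainS m l x L (star m l z w) := by
  induction L with
  | nil => rfl
  | cons i L ih => rw [chainS_cons, chainS_cons, star_assoc, ih]

theorem chainS_add (m l : Fin n) (x : Fin n → NTree n →₀ K) (L : List (Fin n))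
    (z z' : NTree n →₀ K) :
    chainS m l x L (z + z') = chainS m l x L z + chainS m l x L z' := by
  induction L with
  | nil => rfl
  | cons i L ih => rw [chainS_cons, ih, star_add_right, chainS_cons, chainS_cons]

theorem chainS_smul (m l : Fin n) (x : Fin n → NTree n →₀ K) (L : List (Fin n))
    (c : K) (z : NTree n →₀ K) :
    chainS m l x L (c • z) = c • chainS m l x L z := by
  induction L with
  | nil => rfl
  | cons i L ih => rw [chainS_cons, ih, star_smul_right, chainS_cons]

theorem chainS_zero (m l : Fin n) (x : Fin n → NTree n →₀ K) (L : List (Fin n)) :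
    chainS m l x L 0 = 0 := by
  induction L with
  | nil => rfl
  | cons i L ih => rw [chainS_cons, ih, star_zero_right]

theorem finRange_split (j : Fin n) :
    ∃ L₁ L₂, List.finRange n = L₁ ++ j :: L₂ ∧ j ∉ L₁ ∧ j ∉ L₂ := by
  obtain ⟨L₁, L₂, h⟩ := List.append_of_mem (List.mem_finRange j)
  refine ⟨L₁, L₂, h, ?_, ?_⟩
  · have hnd := List.nodup_finRange n
    rw [h, List.nodup_append] at hnd
    intro hj
    exact hnd.2.2 j hj j List.mem_cons_self rfl
  · have hnd := List.nodup_finRange n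
    rw [h, List.nodup_append, List.nodup_cons] at hnd
    exact hnd.2.1.1

variable [NeZero n]

theorem finRange_mTop :
    ∃ L₁, List.finRange n = L₁ ++ [mTop n] ∧ mTop n ∉ L₁ := by
  obtain ⟨L₁, L₂, hsp, h1, _⟩ := finRange_split (mTop n)
  have hL₂ : L₂ = [] := by
    rw [List.eq_nil_iff_forall_not_mem]
    intro b hb
    have hp := List.pairwise_lt_finRange n
    rw [hsp, List.pairwise_append] at hp
    have := (List.pairwise_cons.mp hp.2.1).1 b hb
    have hb' : (b : ℕ) < n := b.isLt
    have : (n - 1 : ℕ) < (b : ℕ) := this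
    have := NeZero.pos n
    omega
  exact ⟨L₁, by rw [hsp, hL₂], h1⟩

theorem finRange_lBot :
    ∃ L₂, List.finRange n = lBot n :: L₂ ∧ lBot n ∉ L₂ := by
  obtain ⟨L₁, L₂, hsp, _, h2⟩ := finRange_split (lBot n)
  have hL₁ : L₁ = [] := by
    rw [List.eq_nil_iff_forall_not_mem]
    intro b hb
    have hp := List.pairwise_lt_finRange n
    rw [hsp, List.pairwise_append] at hp
    have := hp.2.2 b hb (lBot n) List.mem_cons_self
    have : (b : ℕ) < 0 := this
    omega
  exact ⟨L₂, by rw [hsp, hL₁, List.nil_append], h2⟩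

def BS (x : Fin n → NTree n →₀ K) : NTree n →₀ K :=
  chainS (mTop n) (lBot n) x (List.finRange n) (Finsupp.single NTree.leaf 1)

theorem bigStar_eq_BS (h : Fin n → NTree n) :
    bigStar (K := K) h = BS (fun i => Finsupp.single (h i) 1) := by
  rw [bigStar, BS, chainS_eq_foldr]

theorem BS_update_split {j : Fin n} {L₁ L₂ : List (Fin n)}
    (hsp : List.finRange n = L₁ ++ j :: L₂) (h1 : j ∉ L₁) (h2 : j ∉ L₂)
    (x : Fin n → NTree n →₀ K) (w : NTree n →₀ K) :
    BS (Function.update x j w)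
      = chainS (mTop n) (lBot n) x L₁ (star (mTop n) (lBot n) w
          (chainS (mTop n) (lBot n) x L₂ (Finsupp.single NTree.leaf 1))) := by
  rw [BS, hsp, chainS_append, chainS_update_not_mem _ _ h1, chainS_cons,
    Function.update_self, chainS_update_not_mem _ _ h2]

theorem BS_slot_add (x : Fin n → NTree n →₀ K) (j : Fin n) (w w' : NTree n →₀ K) :
    BS (Function.update x j (w + w'))
      = BS (Function.update x j w) + BS (Function.update x j w') := by
  obtain ⟨L₁, L₂, hsp, h1, h2⟩ := finRange_split j
  rw [BS_update_split hsp h1 h2, BS_update_split hsp h1 h2, BS_update_split hsp h1 h2,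
    star_add_left, chainS_add]

theorem BS_slot_smul (x : Fin n → NTree n →₀ K) (j : Fin n) (c : K) (w : NTree n →₀ K) :
    BS (Function.update x j (c • w)) = c • BS (Function.update x j w) := by
  obtain ⟨L₁, L₂, hsp, h1, h2⟩ := finRange_split j
  rw [BS_update_split hsp h1 h2, BS_update_split hsp h1 h2, star_smul_left, chainS_smul]

theorem BS_slot_zero (x : Fin n → NTree n →₀ K) (j : Fin n) :
    BS (Function.update x j 0) = 0 := by
  obtain ⟨L₁, L₂, hsp, h1, h2⟩ := finRange_split j
  rw [BS_update_split hsp h1 h2, star_zero_left, chainS_zero]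

theorem BS_slot_sum (x : Fin n → NTree n →₀ K) (j : Fin n) (w : NTree n →₀ K) :
    BS (Function.update x j w)
      = w.sum fun a c => c • BS (Function.update x j (Finsupp.single a 1)) := by
  induction w using Finsupp.induction_linear with
  | zero => rw [Finsupp.sum_zero_index, BS_slot_zero]
  | add f g hf hg =>
      rw [BS_slot_add, hf, hg, Finsupp.sum_add_index]
      · simp
      · intro a _ c d; rw [add_smul]
  | single a c =>
      rw [Finsupp.sum_single_index (by rw [zero_smul]), single_eq_smul_one a c,
        BS_slot_smul]

theorem BS_star_right (x : Fin n → NTree n →₀ K) (z : NTree n →₀ K) :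
    star (mTop n) (lBot n) (BS x) z
      = BS (Function.update x (mTop n) (star (mTop n) (lBot n) (x (mTop n)) z)) := by
  obtain ⟨L₁, hsp, h1⟩ := finRange_mTop (n := n)
  have hx : BS x = chainS (mTop n) (lBot n) x L₁
      (star (mTop n) (lBot n) (x (mTop n)) (Finsupp.single NTree.leaf 1)) := by
    conv_lhs => rw [← Function.update_eq_self (mTop n) x]
    rw [BS_update_split hsp h1 List.not_mem_nil, chainS_nil]
  rw [hx, chainS_star_out, BS_update_split hsp h1 List.not_mem_nil, chainS_nil,
    tstar_one, tstar_one]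

theorem BS_star_left (x : Fin n → NTree n →₀ K) (w : NTree n →₀ K) :
    star (mTop n) (lBot n) w (BS x)
      = BS (Function.update x (lBot n) (star (mTop n) (lBot n) w (x (lBot n)))) := by
  obtain ⟨L₂, hsp, h2⟩ := finRange_lBot (n := n)
  have hx : BS x = star (mTop n) (lBot n) (x (lBot n))
      (chainS (mTop n) (lBot n) x L₂ (Finsupp.single NTree.leaf 1)) := by
    rw [BS, hsp, chainS_cons]
  rw [hx, ← star_assoc,
    BS_update_split (L₁ := []) (by rw [hsp]; rfl) List.not_mem_nil h2, chainS_nil]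

end ChainBS

section WOps
open Finsupp

variable {K : Type*} [Field K] {n : ℕ}

/-- external tensor of two vectors. -/
def tens (x y : NTree n →₀ K) : (NTree n × NTree n) →₀ K :=
  x.sum fun u c => y.sum fun w d => Finsupp.single (u, w) (c * d)

theorem tens_single_single (u w : NTree n) (c d : K) :
    tens (Finsupp.single u c) (Finsupp.single w d) = Finsupp.single (u, w) (c * d) := by
  rw [tens, Finsupp.sum_single_index, Finsupp.sum_single_index] <;> simp

theorem tens_zero_left (y : NTree n →₀ K) : tens (0 : NTree n →₀ K) y = 0 := by
  simp [tens]

theorem tens_zero_right (x : NTree n →₀ K) : tens x (0 : NTree n →₀ K) = 0 := by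
  simp [tens]

theorem tens_add_left (x x' y : NTree n →₀ K) :
    tens (x + x') y = tens x y + tens x' y := by
  rw [tens, tens, tens, Finsupp.sum_add_index] <;>
    simp [add_mul, single_add, Finsupp.sum_add]

theorem tens_add_right (x y y' : NTree n →₀ K) :
    tens x (y + y') = tens x y + tens x y' := by
  rw [tens, tens, tens, ← Finsupp.sum_add]
  refine Finsupp.sum_congr fun u _ => ?_
  rw [Finsupp.sum_add_index] <;> simp [mul_add, single_add]

theorem tens_smul_left (c : K) (x y : NTree n →₀ K) :
    tens (c • x) y = c • tens x y := by
  rw [tens, tens, Finsupp.sum_smul_index (by simp), Finsupp.smul_sum]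
  refine Finsupp.sum_congr fun u _ => ?_
  rw [Finsupp.smul_sum]
  refine Finsupp.sum_congr fun w _ => ?_
  rw [Finsupp.smul_single]
  congr 1
  rw [smul_eq_mul]; ring

theorem tens_smul_right (c : K) (x y : NTree n →₀ K) :
    tens x (c • y) = c • tens x y := by
  rw [tens, tens, Finsupp.smul_sum]
  refine Finsupp.sum_congr fun u _ => ?_
  rw [Finsupp.sum_smul_index (by simp), Finsupp.smul_sum]
  refine Finsupp.sum_congr fun w _ => ?_
  rw [Finsupp.smul_single]
  congr 1
  rw [smul_eq_mul]; ring

theorem tens_single_right (x : NTree n →₀ K) (w : NTree n) (d : K) :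
    tens x (Finsupp.single w d) = x.sum fun u c => Finsupp.single (u, w) (c * d) := by
  rw [tens]
  exact Finsupp.sum_congr fun u _ => by rw [Finsupp.sum_single_index]; simp

/-- bundled linear maps -/
def tensL (y : NTree n →₀ K) : (NTree n →₀ K) →ₗ[K] ((NTree n × NTree n) →₀ K) where
  toFun x := tens x y
  map_add' x x' := tens_add_left x x' y
  map_smul' c x := tens_smul_left c x y

def tensR (x : NTree n →₀ K) : (NTree n →₀ K) →ₗ[K] ((NTree n × NTree n) →₀ K) where
  toFun y := tens x y
  map_add' y y' := tens_add_right x y y'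
  map_smul' c y := tens_smul_right c x y

def starLM (m l : Fin n) (y : NTree n →₀ K) : (NTree n →₀ K) →ₗ[K] (NTree n →₀ K) where
  toFun x := star m l x y
  map_add' x x' := star_add_left m l x x' y
  map_smul' c x := star_smul_left m l c x y

def starRM (m l : Fin n) (x : NTree n →₀ K) : (NTree n →₀ K) →ₗ[K] (NTree n →₀ K) where
  toFun y := star m l x y
  map_add' y y' := star_add_right m l x y y'
  map_smul' c y := star_smul_right m l c x y

end WOps

section WOps2
open Finsupp

variable {K : Type*} [Field K] {n : ℕ} [NeZero n]

theorem starP_def' (x y : (NTree n × NTree n) →₀ K) :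
    starP x y = x.sum fun p a => y.sum fun q b =>
      (a * b) • tens (mulT (mTop n) (lBot n) p.1 q.1) (mulT (mTop n) (lBot n) p.2 q.2) :=
  rfl

theorem starP_single_single (p q : NTree n × NTree n) (a b : K) :
    starP (Finsupp.single p a) (Finsupp.single q b)
      = (a * b) • tens (mulT (mTop n) (lBot n) p.1 q.1)
          (mulT (mTop n) (lBot n) p.2 q.2) := by
  rw [starP_def', Finsupp.sum_single_index, Finsupp.sum_single_index] <;> simp

theorem starP_zero_left (y : (NTree n × NTree n) →₀ K) : starP 0 y = 0 := by
  simp [starP_def']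

theorem starP_zero_right (x : (NTree n × NTree n) →₀ K) : starP x 0 = 0 := by
  simp [starP_def']

theorem starP_add_left (x x' y : (NTree n × NTree n) →₀ K) :
    starP (x + x') y = starP x y + starP x' y := by
  rw [starP_def', starP_def', starP_def', Finsupp.sum_add_index] <;>
    simp [add_mul, add_smul, Finsupp.sum_add]

theorem starP_add_right (x y y' : (NTree n × NTree n) →₀ K) :
    starP x (y + y') = starP x y + starP x y' := by
  rw [starP_def', starP_def', starP_def', ← Finsupp.sum_add]
  refine Finsupp.sum_congr fun p _ => ?_
  rw [Finsupp.sum_add_index] <;> simp [mul_add, add_smul]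

theorem starP_smul_left (c : K) (x y : (NTree n × NTree n) →₀ K) :
    starP (c • x) y = c • starP x y := by
  rw [starP_def', starP_def', Finsupp.sum_smul_index (by simp), Finsupp.smul_sum]
  refine Finsupp.sum_congr fun p _ => ?_
  rw [Finsupp.smul_sum]
  refine Finsupp.sum_congr fun q _ => ?_
  rw [smul_smul]
  congr 1
  ring

theorem starP_smul_right (c : K) (x y : (NTree n × NTree n) →₀ K) :
    starP x (c • y) = c • starP x y := by
  rw [starP_def', starP_def', Finsupp.smul_sum]
  refine Finsupp.sum_congr fun p _ => ?_
  rw [Finsupp.sum_smul_index (by simp), Finsupp.smul_sum]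
  refine Finsupp.sum_congr fun q _ => ?_
  rw [smul_smul]
  congr 1
  ring

def starPL (y : (NTree n × NTree n) →₀ K) :
    ((NTree n × NTree n) →₀ K) →ₗ[K] ((NTree n × NTree n) →₀ K) where
  toFun x := starP x y
  map_add' x x' := starP_add_left x x' y
  map_smul' c x := starP_smul_left c x y

def starPR (x : (NTree n × NTree n) →₀ K) :
    ((NTree n × NTree n) →₀ K) →ₗ[K] ((NTree n × NTree n) →₀ K) where
  toFun y := starP x y
  map_add' y y' := starP_add_right x y y'
  map_smul' c y := starP_smul_right c x y

theorem starP_tens (x y x' y' : NTree n →₀ K) :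
    starP (tens x y) (tens x' y')
      = tens (star (mTop n) (lBot n) x x') (star (mTop n) (lBot n) y y') := by
  induction x using Finsupp.induction_linear with
  | zero => simp [tens_zero_left, starP_zero_left, star_zero_left]
  | add a b ha hb => simp only [tens_add_left, starP_add_left, star_add_left, ha, hb]
  | single ux cx =>
  induction y using Finsupp.induction_linear with
  | zero => simp [tens_zero_right, starP_zero_left, star_zero_left, tens_zero_left]
  | add a b ha hb => simp only [tens_add_right, starP_add_left, star_add_left,
      tens_add_left, ha, hb]
  | single uy cy =>
  induction x' using Finsupp.induction_linear with
  | zero => simp [tens_zero_left, starP_zero_right, star_zero_right]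
  | add a b ha hb => simp only [tens_add_left, starP_add_right, star_add_right,
      tens_add_left, ha, hb]
  | single ux' cx' =>
  induction y' using Finsupp.induction_linear with
  | zero => simp [tens_zero_right, starP_zero_right, star_zero_right, tens_zero_left,
      tens_zero_right]
  | add a b ha hb => simp only [tens_add_right, starP_add_right, star_add_right,
      tens_add_right, ha, hb]
  | single uy' cy' =>
      rw [single_eq_smul_one ux cx, single_eq_smul_one uy cy,
        single_eq_smul_one ux' cx', single_eq_smul_one uy' cy']
      simp only [tens_smul_left, tens_smul_right, starP_smul_left, starP_smul_right,
        star_smul_left, star_smul_right]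
      rw [tens_single_single, tens_single_single, mul_one, starP_single_single,
        one_mul, one_smul, star_single_single, one_mul, one_smul,
        star_single_single, one_mul, one_smul]
      module

theorem starP_one_left (x : ((NTree n × NTree n) →₀ K)) :
    starP (Finsupp.single (NTree.leaf, NTree.leaf) 1) x = x := by
  rw [starP_def', Finsupp.sum_single_index (by simp)]
  conv_rhs => rw [← Finsupp.sum_single x]
  refine Finsupp.sum_congr fun q _ => ?_
  rw [one_mul, mulT_leaf_left, mulT_leaf_left, tens_single_single, mul_one,
    Finsupp.smul_single, smul_eq_mul, mul_one]

theorem starP_one_right (x : ((NTree n × NTree n) →₀ K)) :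
    starP x (Finsupp.single (NTree.leaf, NTree.leaf) 1) = x := by
  rw [starP_def']
  conv_rhs => rw [← Finsupp.sum_single x]
  refine Finsupp.sum_congr fun p _ => ?_
  rw [Finsupp.sum_single_index (by simp), mul_one, mulT_leaf_right, mulT_leaf_right,
    tens_single_single, mul_one, Finsupp.smul_single, smul_eq_mul, mul_one]

end WOps2

section Delta
open Finsupp

variable {K : Type*} [Field K] {n : ℕ} [NeZero n]

def PhiQ (g : Fin n → NTree n × NTree n) : (NTree n × NTree n) →₀ K :=
  (bigStar fun i => (g i).1).sum fun u c =>
    Finsupp.single (u, NTree.node fun i => (g i).2) c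

theorem deltaN_leaf :
    deltaN (K := K) (NTree.leaf : NTree n)
      = Finsupp.single (NTree.leaf, NTree.leaf) 1 := by
  rw [deltaN]

theorem deltaN_node (f : Fin n → NTree n) :
    deltaN (K := K) (NTree.node f)
      = mlift (K := K) (PhiQ (K := K)) (fun i => deltaN (f i))
        + Finsupp.single (NTree.node f, NTree.leaf) 1 := by
  rw [deltaN]; rfl

theorem PhiQ_eq_tens (g : Fin n → NTree n × NTree n) :
    PhiQ (K := K) g = tens (bigStar fun i => (g i).1)
      (Finsupp.single (NTree.node fun i => (g i).2) 1) := by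
  rw [PhiQ, tens_single_right]
  exact Finsupp.sum_congr fun u _ => by rw [mul_one]

theorem deltaF_single (t : NTree n) (c : K) :
    deltaF (Finsupp.single t c) = c • deltaN t := by
  have : deltaF (K := K) (Finsupp.single t c)
      = (Finsupp.lsum K fun t => LinearMap.toSpanSingleton K _ (deltaN t))
          (Finsupp.single t c) := rfl
  rw [this, Finsupp.lsum_single, LinearMap.toSpanSingleton_apply]

theorem eps_leaf : eps (K := K) (NTree.leaf : NTree n) = 1 := by simp [eps]

theorem eps_node (f : Fin n → NTree n) : eps (K := K) (NTree.node f) = 0 := by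
  simp [eps]

def EL : ((NTree n × NTree n) →₀ K) →ₗ[K] (NTree n →₀ K) :=
  Finsupp.linearCombination K fun p => eps (K := K) p.1 • Finsupp.single p.2 (1:K)

def ER : ((NTree n × NTree n) →₀ K) →ₗ[K] (NTree n →₀ K) :=
  Finsupp.linearCombination K fun p => eps (K := K) p.2 • Finsupp.single p.1 (1:K)

theorem EL_eq_sum (x : (NTree n × NTree n) →₀ K) :
    (x.sum fun p c => (eps p.1 * c) • Finsupp.single p.2 (1:K)) = EL x := by
  rw [EL, Finsupp.linearCombination_apply]
  refine Finsupp.sum_congr fun p _ => ?_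
  rw [smul_smul, mul_comm]

theorem ER_eq_sum (x : (NTree n × NTree n) →₀ K) :
    (x.sum fun p c => (eps p.2 * c) • Finsupp.single p.1 (1:K)) = ER x := by
  rw [ER, Finsupp.linearCombination_apply]
  refine Finsupp.sum_congr fun p _ => ?_
  rw [smul_smul, mul_comm]

theorem nodeAt_apply_leaf (f : Fin n → NTree n) (i : Fin n) (x : NTree n →₀ K) :
    (nodeAt f i x) NTree.leaf = 0 := by
  simp [nodeAt, Finsupp.sum_apply, Finsupp.single_apply]

theorem star_apply_leaf (m l : Fin n) (x y : NTree n →₀ K) :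
    (star m l x y) NTree.leaf = x NTree.leaf * y NTree.leaf := by
  induction x using Finsupp.induction_linear with
  | zero => simp [star_zero_left]
  | add a b ha hb => simp only [star_add_left, Finsupp.add_apply, add_mul, ha, hb]
  | single s a =>
    induction y using Finsupp.induction_linear with
    | zero => simp [star_zero_right]
    | add c d hc hd => simp only [star_add_right, Finsupp.add_apply, mul_add, hc, hd]
    | single t b =>
        rw [star_single_single]
        cases s <;> cases t <;>
          simp [mulT_leaf_left, mulT_leaf_right, mulT_node_node, Finsupp.single_apply,
            Finsupp.smul_apply, Finsupp.add_apply, nodeAt_apply_leaf]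

theorem chainS_apply_leaf (m l : Fin n) (x : Fin n → NTree n →₀ K) (L : List (Fin n))
    (z : NTree n →₀ K) :
    (chainS m l x L z) NTree.leaf
      = (L.map fun i => x i NTree.leaf).prod * z NTree.leaf := by
  induction L with
  | nil => rw [chainS_nil, List.map_nil, List.prod_nil, one_mul]
  | cons i L ih =>
      rw [chainS_cons, star_apply_leaf, ih, List.map_cons, List.prod_cons]
      ring

theorem BS_apply_leaf (x : Fin n → NTree n →₀ K) :
    (BS x) NTree.leaf = ∏ i, x i NTree.leaf := by
  rw [BS, chainS_apply_leaf, Finsupp.single_apply, if_pos rfl, mul_one,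
    Fin.prod_univ_def]

theorem bigStar_apply_leaf (h : Fin n → NTree n) :
    (bigStar (K := K) h) NTree.leaf = ∏ i, eps (K := K) (h i) := by
  rw [bigStar_eq_BS, BS_apply_leaf]
  refine Finset.prod_congr rfl fun i _ => ?_
  rw [Finsupp.single_apply, eps]

theorem mlift_zeroPhi {α : Type*} {M : Type*} [AddCommMonoid M] [Module K M]
    (y : Fin n → (α →₀ K)) : mlift (fun _ => (0 : M)) y = 0 := by
  unfold mlift; simp

theorem mlift_smul_single {α : Type*} {M : Type*} [AddCommMonoid M] [Module K M]
    (Φ : (Fin n → α) → M) (c : Fin n → K) (t : Fin n → α) :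
    mlift Φ (fun i => c i • Finsupp.single (t i) (1:K)) = (∏ i, c i) • Φ t := by
  rw [mlift_eq_sum_subset Φ _ (fun i => {t i})
      (fun i => (Finsupp.support_smul).trans Finsupp.support_single_subset),
    Fintype.piFinset_singleton, Finset.sum_singleton]
  congr 1
  refine Finset.prod_congr rfl fun i _ => ?_
  rw [Finsupp.smul_apply, Finsupp.single_apply, if_pos rfl, smul_eq_mul, mul_one]

theorem counitL (t : NTree n) : EL (K := K) (deltaN t) = Finsupp.single t 1 := by
  induction t with
  | leaf =>
      rw [deltaN_leaf, EL, Finsupp.linearCombination_single, eps_leaf, one_smul,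
        one_smul]
  | node f ih =>
      rw [deltaN_node, map_add, EL, Finsupp.linearCombination_single, eps_node,
        zero_smul, smul_zero, add_zero, ← EL, mlift_map EL PhiQ]
      have hPhi : ∀ g : Fin n → NTree n × NTree n,
          EL (K := K) (PhiQ g)
            = (∏ i, eps (K := K) ((g i).1)) •
                Finsupp.single (NTree.node fun i => (g i).2) 1 := by
        intro g
        rw [PhiQ, Finsupp.sum, map_sum, ← bigStar_apply_leaf]
        set X := bigStar (K := K) fun i => (g i).1 with hX
        rw [show (X NTree.leaf • Finsupp.single (NTree.node fun i => (g i).2) (1:K))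
            = if NTree.leaf ∈ X.support then X NTree.leaf •
                Finsupp.single (NTree.node fun i => (g i).2) (1:K) else 0 by
          by_cases hmem : NTree.leaf ∈ X.support
          · rw [if_pos hmem]
          · rw [if_neg hmem, Finsupp.notMem_support_iff.mp hmem, zero_smul]]
        rw [← Finset.sum_ite_eq' X.support NTree.leaf
          (fun u => X u • Finsupp.single (NTree.node fun i => (g i).2) (1:K))]
        refine Finset.sum_congr rfl fun u _ => ?_
        rw [EL, Finsupp.linearCombination_single]
        by_cases hu : u = NTree.leaf
        · subst hu; rw [if_pos rfl, eps_leaf, one_smul]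
        · rw [if_neg hu, eps, if_neg hu, zero_smul, smul_zero]
      rw [mlift_congrΦ _ hPhi]
      have hcomp := mlift_comp (K := K)
        (Φ := fun t : Fin n → NTree n => Finsupp.single (NTree.node t) (1:K))
        (r := fun _ (p : NTree n × NTree n) => eps (K := K) p.1 • Finsupp.single p.2 (1:K))
        (y := fun i => deltaN (f i))
      rw [show (fun (g : Fin n → NTree n × NTree n) =>
            (∏ i, eps (K := K) ((g i).1)) •
              Finsupp.single (NTree.node fun i => (g i).2) (1:K))
          = fun g => mlift (fun t : Fin n → NTree n => Finsupp.single (NTree.node t) (1:K))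
              (fun i => eps (K := K) ((g i).1) • Finsupp.single ((g i).2) (1:K)) from
        funext fun g => (mlift_smul_single
          (Φ := fun t : Fin n → NTree n => Finsupp.single (NTree.node t) (1:K))
          (fun i => eps (K := K) ((g i).1)) (fun i => (g i).2)).symm]
      rw [← hcomp]
      have : (fun i => Finsupp.linearCombination K
          (fun p : NTree n × NTree n => eps (K := K) p.1 • Finsupp.single p.2 (1:K))
          (deltaN (f i))) = fun i => Finsupp.single (f i) (1:K) := by
        funext i
        rw [← EL, ih i]
      rw [this, mlift_single]

theorem counitR (t : NTree n) : ER (K := K) (deltaN t) = Finsupp.single t 1 := by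
  cases t with
  | leaf =>
      rw [deltaN_leaf, ER, Finsupp.linearCombination_single, eps_leaf, one_smul,
        one_smul]
  | node f =>
      rw [deltaN_node, map_add, ER, Finsupp.linearCombination_single, eps_leaf,
        one_smul, one_smul, ← ER, mlift_map ER PhiQ]
      have hPhi : ∀ g : Fin n → NTree n × NTree n, ER (K := K) (PhiQ g) = 0 := by
        intro g
        rw [PhiQ, Finsupp.sum, map_sum]
        refine Finset.sum_eq_zero fun u _ => ?_
        rw [ER, Finsupp.linearCombination_single, eps_node, zero_smul, smul_zero]
      rw [mlift_congrΦ _ hPhi, mlift_zeroPhi, zero_add]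

end Delta

section Hom
open Finsupp

variable {K : Type*} [Field K] {n : ℕ} [NeZero n]

theorem update_comp_fun {β γ : Type*} (F : β → γ) (p : Fin n → β) (j : Fin n) (v : β) :
    (fun i => F (Function.update p j v i)) = Function.update (fun i => F (p i)) j (F v) := by
  funext i
  by_cases h : i = j
  · subst h; rw [Function.update_self, Function.update_self]
  · rw [Function.update_of_ne h, Function.update_of_ne h]

theorem update_single_family {β : Type*} (p : Fin n → β) (j : Fin n) (q : β) :
    Function.update (fun i => Finsupp.single (p i) (1:K)) j (Finsupp.single q 1)
      = fun i => Finsupp.single (Function.update p j q i) 1 :=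
  (update_comp_fun (fun b => Finsupp.single b (1:K)) p j q).symm

theorem star_single_one_right (w : NTree n) :
    star (mTop n) (lBot n) (Finsupp.single w (1:K)) (Finsupp.single NTree.leaf 1)
      = Finsupp.single w 1 := by
  rw [star_single_single, one_mul, one_smul, mulT_leaf_right]

/-- the key structural computation for `mlift PhiQ` with one slot replaced by a
tensor. -/
theorem KEY2 (p : Fin n → NTree n × NTree n) (j : Fin n) (A B2 : NTree n →₀ K) :
    mlift (K := K) (PhiQ (K := K))
        (Function.update (fun i => Finsupp.single (p i) 1) j (tens A B2))
      = tens (BS (Function.update (fun i => Finsupp.single ((p i).1) 1) j A))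
          (nodeAt (fun i => (p i).2) j B2) := by
  induction A using Finsupp.induction_linear with
  | zero => rw [tens_zero_left, mlift_slot_zero _ _ j (Function.update_self _ _ _),
      BS_slot_zero, tens_zero_left]
  | add a b ha hb =>
      rw [tens_add_left, mlift_slot_add, ha, hb, BS_slot_add, tens_add_left]
  | single a c =>
    induction B2 using Finsupp.induction_linear with
    | zero => rw [tens_zero_right, mlift_slot_zero _ _ j (Function.update_self _ _ _),
        nodeAt_zero, tens_zero_right]
    | add a' b' ha' hb' =>
        rw [tens_add_right, mlift_slot_add, ha', hb', nodeAt_add, tens_add_right]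
    | single d e =>
        rw [tens_single_single, mlift_slot_single, update_single_family,
          single_eq_smul_one a c, BS_slot_smul, single_eq_smul_one d e, nodeAt_smul,
          tens_smul_left, tens_smul_right, mlift_single (K := K) (PhiQ (K := K)),
          PhiQ_eq_tens, nodeAt_single]
        rw [show (fun i => ((Function.update p j (a, d)) i).1)
            = Function.update (fun i => (p i).1) j a from
          update_comp_fun Prod.fst p j (a, d)]
        rw [show (fun i => ((Function.update p j (a, d)) i).2)
            = Function.update (fun i => (p i).2) j d from
          update_comp_fun Prod.snd p j (a, d)]
        rw [bigStar_eq_BS, update_single_family, smul_smul]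

/-- `(I1)`: right multiplication by `b ⊗ 1` commutes with the coproduct sum. -/
theorem hom_I1 (b : NTree n) (Y : Fin n → (NTree n × NTree n) →₀ K) :
    mlift (K := K) (PhiQ (K := K))
        (Function.update Y (mTop n)
          (starP (Y (mTop n)) (Finsupp.single (b, NTree.leaf) 1)))
      = starP (mlift (K := K) (PhiQ (K := K)) Y) (Finsupp.single (b, NTree.leaf) 1) := by
  set B : (NTree n × NTree n) →₀ K := Finsupp.single (b, NTree.leaf) 1 with hB
  refine multilinear_ext
    (H₁ := fun Y => mlift (K := K) (PhiQ (K := K))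
      (Function.update Y (mTop n) (starP (Y (mTop n)) B)))
    (H₂ := fun Y => starP (mlift (K := K) (PhiQ (K := K)) Y) B)
    ?_ ?_ ?_ ?_ ?_ Y
  · intro y j x x'
    by_cases hj : j = mTop n
    · subst hj
      rw [Function.update_self, Function.update_self, Function.update_self,
        Function.update_idem, Function.update_idem, Function.update_idem,
        starP_add_left, mlift_slot_add]
    · rw [Function.update_of_ne (Ne.symm hj), Function.update_of_ne (Ne.symm hj),
        Function.update_of_ne (Ne.symm hj),
        Function.update_comm hj, Function.update_comm hj,
        Function.update_comm hj, mlift_slot_add]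
  · intro y j c x
    by_cases hj : j = mTop n
    · subst hj
      rw [Function.update_self, Function.update_self, Function.update_idem,
        Function.update_idem, starP_smul_left, mlift_slot_smul]
    · rw [Function.update_of_ne (Ne.symm hj), Function.update_of_ne (Ne.symm hj),
        Function.update_comm hj, Function.update_comm hj,
        mlift_slot_smul]
  · intro y j x x'
    rw [mlift_slot_add, starP_add_left]
  · intro y j c x
    rw [mlift_slot_smul, starP_smul_left]
  · intro p
    dsimp only
    rw [mlift_single (K := K) (PhiQ (K := K)), starP_single_single, one_mul, one_smul,
      mulT_leaf_right, KEY2, nodeAt_single, PhiQ_eq_tens, hB]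
    dsimp only
    rw [show (Finsupp.single ((b : NTree n), NTree.leaf) (1:K))
        = tens (Finsupp.single b 1) (Finsupp.single NTree.leaf 1) by
      rw [tens_single_single, one_mul]]
    rw [starP_tens, bigStar_eq_BS, star_single_one_right]
    congr 1
    · rw [show mulT (mTop n) (lBot n) ((p (mTop n)).1) b
          = star (mTop n) (lBot n)
              (Finsupp.single ((p (mTop n)).1) (1:K))
              (Finsupp.single b 1) by
        rw [star_single_single, one_mul, one_smul]]
      rw [← BS_star_right]
    · rw [Function.update_eq_self]

end Hom

section Hom2
open Finsupp

variable {K : Type*} [Field K] {n : ℕ} [NeZero n]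

theorem star_single_one_left (w : NTree n) :
    star (mTop n) (lBot n) (Finsupp.single NTree.leaf (1:K)) (Finsupp.single w 1)
      = Finsupp.single w 1 := by
  rw [star_single_single, one_mul, one_smul, mulT_leaf_left]

theorem hom_I1' (a : NTree n) (Z : Fin n → (NTree n × NTree n) →₀ K) :
    mlift (K := K) (PhiQ (K := K))
        (Function.update Z (lBot n)
          (starP (Finsupp.single (a, NTree.leaf) 1) (Z (lBot n))))
      = starP (Finsupp.single (a, NTree.leaf) 1)
          (mlift (K := K) (PhiQ (K := K)) Z) := by
  set B : (NTree n × NTree n) →₀ K := Finsupp.single (a, NTree.leaf) 1 with hB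
  refine multilinear_ext
    (H₁ := fun Z => mlift (K := K) (PhiQ (K := K))
      (Function.update Z (lBot n) (starP B (Z (lBot n)))))
    (H₂ := fun Z => starP B (mlift (K := K) (PhiQ (K := K)) Z))
    ?_ ?_ ?_ ?_ ?_ Z
  · intro y j x x'
    by_cases hj : j = lBot n
    · subst hj
      rw [Function.update_self, Function.update_self, Function.update_self,
        Function.update_idem, Function.update_idem, Function.update_idem,
        starP_add_right, mlift_slot_add]
    · rw [Function.update_of_ne (Ne.symm hj), Function.update_of_ne (Ne.symm hj),
        Function.update_of_ne (Ne.symm hj),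
        Function.update_comm hj, Function.update_comm hj,
        Function.update_comm hj, mlift_slot_add]
  · intro y j c x
    by_cases hj : j = lBot n
    · subst hj
      rw [Function.update_self, Function.update_self, Function.update_idem,
        Function.update_idem, starP_smul_right, mlift_slot_smul]
    · rw [Function.update_of_ne (Ne.symm hj), Function.update_of_ne (Ne.symm hj),
        Function.update_comm hj, Function.update_comm hj,
        mlift_slot_smul]
  · intro y j x x'
    rw [mlift_slot_add, starP_add_right]
  · intro y j c x
    rw [mlift_slot_smul, starP_smul_right]
  · intro p
    dsimp only
    rw [mlift_single (K := K) (PhiQ (K := K)), starP_single_single, one_mul, one_smul,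
      mulT_leaf_left, KEY2, nodeAt_single, PhiQ_eq_tens, hB]
    dsimp only
    rw [show (Finsupp.single ((a : NTree n), NTree.leaf) (1:K))
        = tens (Finsupp.single a 1) (Finsupp.single NTree.leaf 1) by
      rw [tens_single_single, one_mul]]
    rw [starP_tens, bigStar_eq_BS, star_single_one_left]
    congr 1
    · rw [show mulT (mTop n) (lBot n) a ((p (lBot n)).1)
          = star (mTop n) (lBot n) (Finsupp.single a 1)
              (Finsupp.single ((p (lBot n)).1) (1:K)) by
        rw [star_single_single, one_mul, one_smul]]
      rw [← BS_star_left]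
    · rw [Function.update_eq_self]

theorem hom_I2 (Y Z : Fin n → (NTree n × NTree n) →₀ K) :
    mlift (K := K) (PhiQ (K := K))
        (Function.update Y (mTop n)
          (starP (Y (mTop n)) (mlift (K := K) (PhiQ (K := K)) Z)))
      + mlift (K := K) (PhiQ (K := K))
          (Function.update Z (lBot n)
            (starP (mlift (K := K) (PhiQ (K := K)) Y) (Z (lBot n))))
      = starP (mlift (K := K) (PhiQ (K := K)) Y)
          (mlift (K := K) (PhiQ (K := K)) Z) := by
  -- first, multilinear extension in `Y`
  refine multilinear_ext
    (H₁ := fun Y => mlift (K := K) (PhiQ (K := K))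
        (Function.update Y (mTop n)
          (starP (Y (mTop n)) (mlift (K := K) (PhiQ (K := K)) Z)))
      + mlift (K := K) (PhiQ (K := K))
          (Function.update Z (lBot n)
            (starP (mlift (K := K) (PhiQ (K := K)) Y) (Z (lBot n)))))
    (H₂ := fun Y => starP (mlift (K := K) (PhiQ (K := K)) Y)
        (mlift (K := K) (PhiQ (K := K)) Z))
    ?_ ?_ ?_ ?_ ?_ Y
  · intro y j x x'
    by_cases hj : j = mTop n
    · subst hj
      rw [Function.update_self, Function.update_self, Function.update_self,
        Function.update_idem, Function.update_idem, Function.update_idem,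
        starP_add_left, mlift_slot_add, mlift_slot_add, starP_add_left,
        mlift_slot_add]
      abel
    · rw [Function.update_of_ne (Ne.symm hj), Function.update_of_ne (Ne.symm hj),
        Function.update_of_ne (Ne.symm hj),
        Function.update_comm hj, Function.update_comm hj,
        Function.update_comm hj, mlift_slot_add, mlift_slot_add, starP_add_left,
        mlift_slot_add]
      abel
  · intro y j c x
    by_cases hj : j = mTop n
    · subst hj
      rw [Function.update_self, Function.update_self, Function.update_idem,
        Function.update_idem, starP_smul_left, mlift_slot_smul, mlift_slot_smul,
        starP_smul_left, mlift_slot_smul, smul_add]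
    · rw [Function.update_of_ne (Ne.symm hj), Function.update_of_ne (Ne.symm hj),
        Function.update_comm hj, Function.update_comm hj, mlift_slot_smul,
        mlift_slot_smul, starP_smul_left, mlift_slot_smul, smul_add]
  · intro y j x x'
    rw [mlift_slot_add, starP_add_left]
  · intro y j c x
    rw [mlift_slot_smul, starP_smul_left]
  · intro p
    dsimp only
    rw [mlift_single (K := K) (PhiQ (K := K))]
    -- now a multilinear extension in `Z`
    refine multilinear_ext
      (H₁ := fun Z => mlift (K := K) (PhiQ (K := K))
          (Function.update (fun i => Finsupp.single (p i) 1) (mTop n)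
            (starP (Finsupp.single (p (mTop n)) 1)
              (mlift (K := K) (PhiQ (K := K)) Z)))
        + mlift (K := K) (PhiQ (K := K))
            (Function.update Z (lBot n)
              (starP (PhiQ (K := K) p) (Z (lBot n)))))
      (H₂ := fun Z => starP (PhiQ (K := K) p) (mlift (K := K) (PhiQ (K := K)) Z))
      ?_ ?_ ?_ ?_ ?_ Z
    · intro y j x x'
      by_cases hj : j = lBot n
      · subst hj
        rw [Function.update_self, Function.update_self, Function.update_self,
          Function.update_idem, Function.update_idem, Function.update_idem,
          starP_add_right, mlift_slot_add, mlift_slot_add, starP_add_right,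
          mlift_slot_add]
        abel
      · rw [Function.update_of_ne (Ne.symm hj), Function.update_of_ne (Ne.symm hj),
          Function.update_of_ne (Ne.symm hj),
          Function.update_comm hj, Function.update_comm hj,
          Function.update_comm hj, mlift_slot_add, mlift_slot_add, starP_add_right,
          mlift_slot_add]
        abel
    · intro y j c x
      by_cases hj : j = lBot n
      · subst hj
        rw [Function.update_self, Function.update_self, Function.update_idem,
          Function.update_idem, starP_smul_right, mlift_slot_smul, mlift_slot_smul,
          starP_smul_right, mlift_slot_smul, smul_add]
      · rw [Function.update_of_ne (Ne.symm hj), Function.update_of_ne (Ne.symm hj),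
          Function.update_comm hj, Function.update_comm hj, mlift_slot_smul,
          mlift_slot_smul, starP_smul_right, mlift_slot_smul, smul_add]
    · intro y j x x'
      rw [mlift_slot_add, starP_add_right]
    · intro y j c x
      rw [mlift_slot_smul, starP_smul_right]
    · intro r
      dsimp only
      rw [mlift_single (K := K) (PhiQ (K := K))]
      rw [show (Finsupp.single (p (mTop n)) (1:K))
          = tens (Finsupp.single ((p (mTop n)).1) 1)
              (Finsupp.single ((p (mTop n)).2) 1) by
        rw [tens_single_single, one_mul]]
      rw [show (Finsupp.single (r (lBot n)) (1:K))
          = tens (Finsupp.single ((r (lBot n)).1) 1)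
              (Finsupp.single ((r (lBot n)).2) 1) by
        rw [tens_single_single, one_mul]]
      rw [PhiQ_eq_tens, PhiQ_eq_tens, starP_tens, starP_tens, starP_tens]
      rw [show star (mTop n) (lBot n) (Finsupp.single ((p (mTop n)).2) (1:K))
            (Finsupp.single (NTree.node fun i => (r i).2) 1)
          = mulT (mTop n) (lBot n) ((p (mTop n)).2) (NTree.node fun i => (r i).2) by
        rw [star_single_single, one_mul, one_smul]]
      rw [show star (mTop n) (lBot n) (Finsupp.single (NTree.node fun i => (p i).2) (1:K))
            (Finsupp.single ((r (lBot n)).2) 1)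
          = mulT (mTop n) (lBot n) (NTree.node fun i => (p i).2) ((r (lBot n)).2) by
        rw [star_single_single, one_mul, one_smul]]
      rw [show star (mTop n) (lBot n) (Finsupp.single (NTree.node fun i => (p i).2) (1:K))
            (Finsupp.single (NTree.node fun i => (r i).2) 1)
          = mulT (mTop n) (lBot n) (NTree.node fun i => (p i).2)
              (NTree.node fun i => (r i).2) by
        rw [star_single_single, one_mul, one_smul]]
      rw [KEY2, KEY2, mulT_node_node, tens_add_right]
      congr 1
      · -- first chunks agree via `BS_star_right`
        rw [show star (mTop n) (lBot n) (Finsupp.single ((p (mTop n)).1) (1:K))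
              (bigStar fun i => (r i).1)
            = star (mTop n) (lBot n)
                ((fun i => Finsupp.single ((p i).1) (1:K)) (mTop n))
                (bigStar fun i => (r i).1) from rfl]
        rw [← BS_star_right, bigStar_eq_BS, bigStar_eq_BS]
      · -- second chunks agree via `BS_star_left`
        rw [show star (mTop n) (lBot n) (bigStar fun i => (p i).1)
              (Finsupp.single ((r (lBot n)).1) (1:K))
            = star (mTop n) (lBot n) (bigStar fun i => (p i).1)
                ((fun i => Finsupp.single ((r i).1) (1:K)) (lBot n)) from rfl]
        rw [← BS_star_left, bigStar_eq_BS, bigStar_eq_BS]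

end Hom2

section HomMain
open Finsupp

variable {K : Type*} [Field K] {n : ℕ} [NeZero n]

theorem deltaF_nodeAt (f : Fin n → NTree n) (j : Fin n) (x : NTree n →₀ K) :
    deltaF (nodeAt f j x)
      = mlift (K := K) (PhiQ (K := K))
          (Function.update (fun i => deltaN (f i)) j (deltaF x))
        + tens (nodeAt f j x) (Finsupp.single NTree.leaf 1) := by
  induction x using Finsupp.induction_linear with
  | zero =>
      rw [nodeAt_zero, map_zero,
        mlift_slot_zero _ _ j (Function.update_self _ _ _), tens_zero_left, add_zero]
  | add a b ha hb =>
      rw [nodeAt_add, map_add, ha, hb, map_add, mlift_slot_add, tens_add_left]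
      abel
  | single v c =>
      rw [nodeAt_single, deltaF_single, deltaN_node, smul_add, deltaF_single,
        show (fun i => deltaN (K := K) (Function.update f j v i))
          = Function.update (fun i => deltaN (K := K) (f i)) j (deltaN v) from
          update_comp_fun _ f j v,
        mlift_slot_smul, tens_single_single, mul_one, Finsupp.smul_single,
        smul_eq_mul, mul_one]

theorem hom_main (s t : NTree n) :
    deltaF (mulT (mTop n) (lBot n) s t) = starP (K := K) (deltaN s) (deltaN t) := by
  generalize hN : s.deg + t.deg = N
  induction N using Nat.strong_induction_on generalizing s t with
  | _ N IH =>
  cases s with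
  | leaf => rw [mulT_leaf_left, deltaF_single, one_smul, deltaN_leaf, starP_one_left]
  | node f =>
    cases t with
    | leaf =>
        rw [mulT_leaf_right, deltaF_single, one_smul, deltaN_leaf, starP_one_right]
    | node g =>
      have IH1 : deltaF (mulT (mTop n) (lBot n) (f (mTop n)) (.node g))
          = starP (K := K) (deltaN (f (mTop n))) (deltaN (.node g)) := by
        refine IH _ ?_ _ _ rfl
        subst hN
        have := NTree.deg_lt f (mTop n)
        omega
      have IH2 : deltaF (mulT (mTop n) (lBot n) (.node f) (g (lBot n)))
          = starP (K := K) (deltaN (.node f)) (deltaN (g (lBot n))) := by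
        refine IH _ ?_ _ _ rfl
        subst hN
        have := NTree.deg_lt g (lBot n)
        omega
      have h2 := hom_I2 (fun i => deltaN (K := K) (f i)) (fun i => deltaN (K := K) (g i))
      have h1 := hom_I1 (NTree.node g) (fun i => deltaN (K := K) (f i))
      have h1' := hom_I1' (NTree.node f) (fun i => deltaN (K := K) (g i))
      rw [mulT_node_node, map_add, deltaF_nodeAt, deltaF_nodeAt, IH1, IH2,
        deltaN_node f, deltaN_node g]
      simp only [starP_add_left, starP_add_right, mlift_slot_add]
      rw [starP_single_single, one_mul, one_smul, mulT_leaf_left, mulT_node_node,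
        tens_add_left, h1, h1', ← h2]
      abel

end HomMain

section CoOps
open Finsupp

variable {K : Type*} [Field K] {n : ℕ} [NeZero n]

/-- `X ⊗ (pairs)`: first factor a vector, second a tensor-square element. -/
def t3L (X : NTree n →₀ K) (Z : (NTree n × NTree n) →₀ K) :
    (NTree n × NTree n × NTree n) →₀ K :=
  X.sum fun u c => Z.sum fun q d => Finsupp.single (u, q.1, q.2) (c * d)

/-- `X ⊗ A ⊗ w`. -/
def t3R (X A : NTree n →₀ K) (w : NTree n) : (NTree n × NTree n × NTree n) →₀ K :=
  X.sum fun a c => A.sum fun b d => Finsupp.single (a, b, w) (c * d)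

/-- `(pairs) ⊗ w`. -/
def wPair (x : (NTree n × NTree n) →₀ K) (w : NTree n) :
    (NTree n × NTree n × NTree n) →₀ K :=
  x.sum fun q d => Finsupp.single (q.1, q.2, w) d

theorem t3L_single_single (u : NTree n) (q : NTree n × NTree n) (c d : K) :
    t3L (Finsupp.single u c) (Finsupp.single q d)
      = Finsupp.single (u, q.1, q.2) (c * d) := by
  rw [t3L, Finsupp.sum_single_index, Finsupp.sum_single_index] <;> simp

theorem t3L_zero_left (Z : (NTree n × NTree n) →₀ K) : t3L 0 Z = 0 := by simp [t3L]

theorem t3L_zero_right (X : NTree n →₀ K) : t3L X 0 = 0 := by simp [t3L]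

theorem t3L_add_left (X X' : NTree n →₀ K) (Z : (NTree n × NTree n) →₀ K) :
    t3L (X + X') Z = t3L X Z + t3L X' Z := by
  rw [t3L, t3L, t3L, Finsupp.sum_add_index] <;>
    simp [add_mul, single_add, Finsupp.sum_add]

theorem t3L_add_right (X : NTree n →₀ K) (Z Z' : (NTree n × NTree n) →₀ K) :
    t3L X (Z + Z') = t3L X Z + t3L X Z' := by
  rw [t3L, t3L, t3L, ← Finsupp.sum_add]
  refine Finsupp.sum_congr fun u _ => ?_
  rw [Finsupp.sum_add_index] <;> simp [mul_add, single_add]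

theorem t3L_smul_left (c : K) (X : NTree n →₀ K) (Z : (NTree n × NTree n) →₀ K) :
    t3L (c • X) Z = c • t3L X Z := by
  rw [t3L, t3L, Finsupp.sum_smul_index (by simp), Finsupp.smul_sum]
  refine Finsupp.sum_congr fun u _ => ?_
  rw [Finsupp.smul_sum]
  refine Finsupp.sum_congr fun q _ => ?_
  rw [Finsupp.smul_single]
  congr 1
  rw [smul_eq_mul]; ring

theorem t3L_smul_right (c : K) (X : NTree n →₀ K) (Z : (NTree n × NTree n) →₀ K) :
    t3L X (c • Z) = c • t3L X Z := by
  rw [t3L, t3L, Finsupp.smul_sum]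
  refine Finsupp.sum_congr fun u _ => ?_
  rw [Finsupp.sum_smul_index (by simp), Finsupp.smul_sum]
  refine Finsupp.sum_congr fun q _ => ?_
  rw [Finsupp.smul_single]
  congr 1
  rw [smul_eq_mul]; ring

def t3LR (X : NTree n →₀ K) :
    ((NTree n × NTree n) →₀ K) →ₗ[K] ((NTree n × NTree n × NTree n) →₀ K) where
  toFun Z := t3L X Z
  map_add' Z Z' := t3L_add_right X Z Z'
  map_smul' c Z := t3L_smul_right c X Z

theorem t3R_single_single (a b : NTree n) (w : NTree n) (c d : K) :
    t3R (Finsupp.single a c) (Finsupp.single b d) w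
      = Finsupp.single (a, b, w) (c * d) := by
  rw [t3R, Finsupp.sum_single_index, Finsupp.sum_single_index] <;> simp

theorem t3R_zero_left (A : NTree n →₀ K) (w : NTree n) : t3R 0 A w = 0 := by simp [t3R]

theorem t3R_zero_right (X : NTree n →₀ K) (w : NTree n) : t3R X 0 w = 0 := by
  simp [t3R]

theorem t3R_add_left (X X' A : NTree n →₀ K) (w : NTree n) :
    t3R (X + X') A w = t3R X A w + t3R X' A w := by
  rw [t3R, t3R, t3R, Finsupp.sum_add_index] <;>
    simp [add_mul, single_add, Finsupp.sum_add]

theorem t3R_add_right (X A A' : NTree n →₀ K) (w : NTree n) :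
    t3R X (A + A') w = t3R X A w + t3R X A' w := by
  rw [t3R, t3R, t3R, ← Finsupp.sum_add]
  refine Finsupp.sum_congr fun a _ => ?_
  rw [Finsupp.sum_add_index] <;> simp [mul_add, single_add]

theorem t3R_smul_left (c : K) (X A : NTree n →₀ K) (w : NTree n) :
    t3R (c • X) A w = c • t3R X A w := by
  rw [t3R, t3R, Finsupp.sum_smul_index (by simp), Finsupp.smul_sum]
  refine Finsupp.sum_congr fun a _ => ?_
  rw [Finsupp.smul_sum]
  refine Finsupp.sum_congr fun b _ => ?_
  rw [Finsupp.smul_single]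
  congr 1
  rw [smul_eq_mul]; ring

theorem t3R_smul_right (c : K) (X A : NTree n →₀ K) (w : NTree n) :
    t3R X (c • A) w = c • t3R X A w := by
  rw [t3R, t3R, Finsupp.smul_sum]
  refine Finsupp.sum_congr fun a _ => ?_
  rw [Finsupp.sum_smul_index (by simp), Finsupp.smul_sum]
  refine Finsupp.sum_congr fun b _ => ?_
  rw [Finsupp.smul_single]
  congr 1
  rw [smul_eq_mul]; ring

theorem wPair_single (q : NTree n × NTree n) (d : K) (w : NTree n) :
    wPair (Finsupp.single q d) w = Finsupp.single (q.1, q.2, w) d := by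
  rw [wPair, Finsupp.sum_single_index]; simp

theorem wPair_zero (w : NTree n) : wPair (0 : (NTree n × NTree n) →₀ K) w = 0 := by
  simp [wPair]

theorem wPair_add (x x' : (NTree n × NTree n) →₀ K) (w : NTree n) :
    wPair (x + x') w = wPair x w + wPair x' w := by
  rw [wPair, wPair, wPair, Finsupp.sum_add_index] <;> simp [single_add]

theorem wPair_smul (c : K) (x : (NTree n × NTree n) →₀ K) (w : NTree n) :
    wPair (c • x) w = c • wPair x w := by
  rw [wPair, wPair, Finsupp.sum_smul_index (by simp), Finsupp.smul_sum]
  refine Finsupp.sum_congr fun q _ => ?_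
  rw [Finsupp.smul_single, smul_eq_mul]

def wPairL (w : NTree n) :
    ((NTree n × NTree n) →₀ K) →ₗ[K] ((NTree n × NTree n × NTree n) →₀ K) where
  toFun x := wPair x w
  map_add' x x' := wPair_add x x' w
  map_smul' c x := wPair_smul c x w

theorem wPair_tens (A B : NTree n →₀ K) (w : NTree n) :
    wPair (tens A B) w = t3R A B w := by
  induction A using Finsupp.induction_linear with
  | zero => rw [tens_zero_left, wPair_zero, t3R_zero_left]
  | add a b ha hb => rw [tens_add_left, wPair_add, ha, hb, t3R_add_left]
  | single a c =>
    induction B using Finsupp.induction_linear with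
    | zero => rw [tens_zero_right, wPair_zero, t3R_zero_right]
    | add a' b' ha' hb' => rw [tens_add_right, wPair_add, ha', hb', t3R_add_right]
    | single b d => rw [tens_single_single, wPair_single, t3R_single_single]

theorem t3L_tens (X A : NTree n →₀ K) (w : NTree n) :
    t3L X (tens A (Finsupp.single w 1)) = t3R X A w := by
  induction A using Finsupp.induction_linear with
  | zero => rw [tens_zero_left, t3L_zero_right, t3R_zero_right]
  | add a b ha hb => rw [tens_add_left, t3L_add_right, ha, hb, t3R_add_right]
  | single b d =>
      rw [tens_single_single, mul_one]
      induction X using Finsupp.induction_linear with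
      | zero => rw [t3L_zero_left, t3R_zero_left]
      | add a' b' ha' hb' => rw [t3L_add_left, ha', hb', t3R_add_left]
      | single a c => rw [t3L_single_single, t3R_single_single]

/-! chains of `starP` -/

def chainP (x : Fin n → (NTree n × NTree n) →₀ K) :
    List (Fin n) → ((NTree n × NTree n) →₀ K) → ((NTree n × NTree n) →₀ K)
  | [], z => z
  | i :: L, z => starP (x i) (chainP x L z)

@[simp] theorem chainP_nil (x : Fin n → (NTree n × NTree n) →₀ K)
    (z : (NTree n × NTree n) →₀ K) : chainP x [] z = z := rfl

@[simp] theorem chainP_cons (x : Fin n → (NTree n × NTree n) →₀ K) (i : Fin n)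
    (L : List (Fin n)) (z : (NTree n × NTree n) →₀ K) :
    chainP x (i :: L) z = starP (x i) (chainP x L z) := rfl

theorem chainP_append (x : Fin n → (NTree n × NTree n) →₀ K) (L₁ L₂ : List (Fin n))
    (z : (NTree n × NTree n) →₀ K) :
    chainP x (L₁ ++ L₂) z = chainP x L₁ (chainP x L₂ z) := by
  induction L₁ with
  | nil => rfl
  | cons i L ih => rw [List.cons_append, chainP_cons, chainP_cons, ih]

theorem chainP_update_not_mem {j : Fin n} {L : List (Fin n)} (h : j ∉ L)
    (x : Fin n → (NTree n × NTree n) →₀ K) (w z : (NTree n × NTree n) →₀ K) :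
    chainP (Function.update x j w) L z = chainP x L z := by
  induction L with
  | nil => rfl
  | cons i L ih =>
      rw [chainP_cons, chainP_cons, Function.update_of_ne (by rintro rfl; exact h (by simp)),
        ih (fun hm => h (List.mem_cons_of_mem _ hm))]

theorem chainP_add (x : Fin n → (NTree n × NTree n) →₀ K) (L : List (Fin n))
    (z z' : (NTree n × NTree n) →₀ K) :
    chainP x L (z + z') = chainP x L z + chainP x L z' := by
  induction L with
  | nil => rfl
  | cons i L ih => rw [chainP_cons, ih, starP_add_right, chainP_cons, chainP_cons]

theorem chainP_smul (x : Fin n → (NTree n × NTree n) →₀ K) (L : List (Fin n))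
    (c : K) (z : (NTree n × NTree n) →₀ K) :
    chainP x L (c • z) = c • chainP x L z := by
  induction L with
  | nil => rfl
  | cons i L ih => rw [chainP_cons, ih, starP_smul_right, chainP_cons]

theorem chainP_zero (x : Fin n → (NTree n × NTree n) →₀ K) (L : List (Fin n)) :
    chainP x L 0 = 0 := by
  induction L with
  | nil => rfl
  | cons i L ih => rw [chainP_cons, ih, starP_zero_right]

def BS2 (x : Fin n → (NTree n × NTree n) →₀ K) : (NTree n × NTree n) →₀ K :=
  chainP x (List.finRange n) (Finsupp.single (NTree.leaf, NTree.leaf) 1)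

theorem BS2_update_split {j : Fin n} {L₁ L₂ : List (Fin n)}
    (hsp : List.finRange n = L₁ ++ j :: L₂) (h1 : j ∉ L₁) (h2 : j ∉ L₂)
    (x : Fin n → (NTree n × NTree n) →₀ K) (w : (NTree n × NTree n) →₀ K) :
    BS2 (Function.update x j w)
      = chainP x L₁ (starP w (chainP x L₂ (Finsupp.single (NTree.leaf, NTree.leaf) 1))) := by
  rw [BS2, hsp, chainP_append, chainP_update_not_mem h1, chainP_cons,
    Function.update_self, chainP_update_not_mem h2]

theorem BS2_slot_add (x : Fin n → (NTree n × NTree n) →₀ K) (j : Fin n)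
    (w w' : (NTree n × NTree n) →₀ K) :
    BS2 (Function.update x j (w + w'))
      = BS2 (Function.update x j w) + BS2 (Function.update x j w') := by
  obtain ⟨L₁, L₂, hsp, h1, h2⟩ := finRange_split j
  rw [BS2_update_split hsp h1 h2, BS2_update_split hsp h1 h2, BS2_update_split hsp h1 h2,
    starP_add_left, chainP_add]

theorem BS2_slot_smul (x : Fin n → (NTree n × NTree n) →₀ K) (j : Fin n) (c : K)
    (w : (NTree n × NTree n) →₀ K) :
    BS2 (Function.update x j (c • w)) = c • BS2 (Function.update x j w) := by
  obtain ⟨L₁, L₂, hsp, h1, h2⟩ := finRange_split j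
  rw [BS2_update_split hsp h1 h2, BS2_update_split hsp h1 h2, starP_smul_left,
    chainP_smul]

theorem BS2_slot_zero (x : Fin n → (NTree n × NTree n) →₀ K) (j : Fin n) :
    BS2 (Function.update x j 0) = 0 := by
  obtain ⟨L₁, L₂, hsp, h1, h2⟩ := finRange_split j
  rw [BS2_update_split hsp h1 h2, starP_zero_left, chainP_zero]

theorem chainP_tens (x y : Fin n → NTree n →₀ K) (L : List (Fin n))
    (a b : NTree n →₀ K) :
    chainP (fun i => tens (x i) (y i)) L (tens a b)
      = tens (chainS (mTop n) (lBot n) x L a) (chainS (mTop n) (lBot n) y L b) := by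
  induction L with
  | nil => rfl
  | cons i L ih => rw [chainP_cons, ih, starP_tens, chainS_cons, chainS_cons]

theorem BS2_tens (x y : Fin n → NTree n →₀ K) :
    BS2 (fun i => tens (x i) (y i)) = tens (BS x) (BS y) := by
  rw [BS2, BS, BS,
    show (Finsupp.single ((NTree.leaf : NTree n), (NTree.leaf : NTree n)) (1:K))
      = tens (Finsupp.single NTree.leaf 1) (Finsupp.single NTree.leaf 1) by
    rw [tens_single_single, one_mul], chainP_tens]

/-! `deltaF` is multiplicative on chains -/

theorem deltaF_star (x y : NTree n →₀ K) :
    deltaF (star (mTop n) (lBot n) x y) = starP (K := K) (deltaF x) (deltaF y) := by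
  induction x using Finsupp.induction_linear with
  | zero => rw [star_zero_left, map_zero, starP_zero_left]
  | add a b ha hb => rw [star_add_left, map_add, ha, hb, map_add, starP_add_left]
  | single s a =>
    induction y using Finsupp.induction_linear with
    | zero => rw [star_zero_right, map_zero, starP_zero_right]
    | add c d hc hd => rw [star_add_right, map_add, hc, hd, map_add, starP_add_right]
    | single t b =>
        rw [star_single_single, map_smul, hom_main, deltaF_single, deltaF_single,
          starP_smul_left, starP_smul_right, smul_smul]

theorem deltaF_chainS (x : Fin n → NTree n →₀ K) (L : List (Fin n))
    (z : NTree n →₀ K) :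
    deltaF (chainS (mTop n) (lBot n) x L z)
      = chainP (fun i => deltaF (x i)) L (deltaF z) := by
  induction L with
  | nil => rfl
  | cons i L ih => rw [chainS_cons, deltaF_star, ih, chainP_cons]

theorem deltaF_BS (x : Fin n → NTree n →₀ K) :
    deltaF (BS x) = BS2 (fun i => deltaF (x i)) := by
  rw [BS, deltaF_chainS, BS2, deltaF_single, one_smul, deltaN_leaf]

end CoOps

section Coassoc
open Finsupp

variable {K : Type*} [Field K] {n : ℕ} [NeZero n]

theorem expandL_single (p : NTree n × NTree n) (c : K) :
    expandL (K := K) (Finsupp.single p c)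
      = (deltaN p.1).sum fun q d => Finsupp.single (q.1, q.2, p.2) (c * d) := by
  rw [expandL, Finsupp.sum_single_index]
  simp

theorem expandR_single (p : NTree n × NTree n) (c : K) :
    expandR (K := K) (Finsupp.single p c)
      = (deltaN p.2).sum fun q d => Finsupp.single (p.1, q.1, q.2) (c * d) := by
  rw [expandR, Finsupp.sum_single_index]
  simp

theorem expandL_zero : expandL (K := K) (0 : (NTree n × NTree n) →₀ K) = 0 := by
  simp [expandL]

theorem expandR_zero : expandR (K := K) (0 : (NTree n × NTree n) →₀ K) = 0 := by
  simp [expandR]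

theorem expandL_add (x x' : (NTree n × NTree n) →₀ K) :
    expandL (x + x') = expandL x + expandL x' := by
  rw [expandL, expandL, expandL, Finsupp.sum_add_index] <;>
    simp [add_mul, single_add, Finsupp.sum_add]

theorem expandR_add (x x' : (NTree n × NTree n) →₀ K) :
    expandR (x + x') = expandR x + expandR x' := by
  rw [expandR, expandR, expandR, Finsupp.sum_add_index] <;>
    simp [add_mul, single_add, Finsupp.sum_add]

theorem expandL_smul (c : K) (x : (NTree n × NTree n) →₀ K) :
    expandL (c • x) = c • expandL x := by
  rw [expandL, expandL, Finsupp.sum_smul_index (by simp), Finsupp.smul_sum]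
  refine Finsupp.sum_congr fun p _ => ?_
  rw [Finsupp.smul_sum]
  refine Finsupp.sum_congr fun q _ => ?_
  rw [Finsupp.smul_single]
  congr 1
  rw [smul_eq_mul]; ring

theorem expandR_smul (c : K) (x : (NTree n × NTree n) →₀ K) :
    expandR (c • x) = c • expandR x := by
  rw [expandR, expandR, Finsupp.sum_smul_index (by simp), Finsupp.smul_sum]
  refine Finsupp.sum_congr fun p _ => ?_
  rw [Finsupp.smul_sum]
  refine Finsupp.sum_congr fun q _ => ?_
  rw [Finsupp.smul_single]
  congr 1
  rw [smul_eq_mul]; ring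

def expandLL : ((NTree n × NTree n) →₀ K) →ₗ[K] ((NTree n × NTree n × NTree n) →₀ K) where
  toFun := expandL
  map_add' := expandL_add
  map_smul' := expandL_smul

def expandRL : ((NTree n × NTree n) →₀ K) →ₗ[K] ((NTree n × NTree n × NTree n) →₀ K) where
  toFun := expandR
  map_add' := expandR_add
  map_smul' := expandR_smul

theorem expandL_tens (X : NTree n →₀ K) (w : NTree n) :
    expandL (tens X (Finsupp.single w 1)) = wPair (deltaF X) w := by
  induction X using Finsupp.induction_linear with
  | zero => rw [tens_zero_left, expandL_zero, map_zero, wPair_zero]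
  | add a b ha hb => rw [tens_add_left, expandL_add, ha, hb, map_add, wPair_add]
  | single u c =>
      rw [tens_single_single, mul_one, expandL_single, deltaF_single, wPair_smul,
        wPair, Finsupp.smul_sum]
      refine Finsupp.sum_congr fun q _ => ?_
      rw [Finsupp.smul_single, smul_eq_mul]

theorem expandR_tens (X : NTree n →₀ K) (w : NTree n) :
    expandR (tens X (Finsupp.single w 1)) = t3L X (deltaN w) := by
  induction X using Finsupp.induction_linear with
  | zero => rw [tens_zero_left, expandR_zero, t3L_zero_left]
  | add a b ha hb => rw [tens_add_left, expandR_add, ha, hb, t3L_add_left]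
  | single u c =>
      rw [tens_single_single, mul_one, expandR_single, t3L, Finsupp.sum_single_index]
      simp

theorem expandL_as_lc (p : NTree n × NTree n) :
    expandL (K := K) (Finsupp.single p 1)
      = Finsupp.linearCombination K
          (fun q : NTree n × NTree n => Finsupp.single (q.1, q.2, p.2) (1:K))
          (deltaN p.1) := by
  rw [expandL_single, Finsupp.linearCombination_apply]
  refine Finsupp.sum_congr fun q _ => ?_
  rw [one_mul, Finsupp.smul_single, smul_eq_mul, mul_one]

theorem expandR_as_lc (p : NTree n × NTree n) :
    expandR (K := K) (Finsupp.single p 1)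
      = Finsupp.linearCombination K
          (fun q : NTree n × NTree n => Finsupp.single (p.1, q.1, q.2) (1:K))
          (deltaN p.2) := by
  rw [expandR_single, Finsupp.linearCombination_apply]
  refine Finsupp.sum_congr fun q _ => ?_
  rw [one_mul, Finsupp.smul_single, smul_eq_mul, mul_one]

theorem mlift_addPhi {α : Type*} {M : Type*} [AddCommMonoid M] [Module K M]
    (Φ Φ' : (Fin n → α) → M) (y : Fin n → (α →₀ K)) :
    mlift (fun g => Φ g + Φ' g) y = mlift Φ y + mlift Φ' y := by
  unfold mlift
  rw [← Finset.sum_add_distrib]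
  exact Finset.sum_congr rfl fun g _ => smul_add _ _ _

/-- the triple-coproduct basis map. -/
def PhiPsi (h : Fin n → NTree n × NTree n × NTree n) :
    (NTree n × NTree n × NTree n) →₀ K :=
  t3R (BS fun i => Finsupp.single ((h i).1) 1) (BS fun i => Finsupp.single ((h i).2.1) 1)
    (NTree.node fun i => (h i).2.2)

theorem wPair_BS2 (w : NTree n) (Z : Fin n → (NTree n × NTree n) →₀ K) :
    wPair (BS2 Z) w
      = mlift (K := K) (fun q : Fin n → NTree n × NTree n =>
          t3R (BS fun i => Finsupp.single ((q i).1) 1)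
            (BS fun i => Finsupp.single ((q i).2) 1) w) Z := by
  refine multilinear_ext
    (H₁ := fun Z => wPair (BS2 Z) w)
    (H₂ := fun Z => mlift (K := K) (fun q : Fin n → NTree n × NTree n =>
      t3R (BS fun i => Finsupp.single ((q i).1) 1)
        (BS fun i => Finsupp.single ((q i).2) 1) w) Z)
    ?_ ?_ ?_ ?_ ?_ Z
  · intro y j x x'
    rw [BS2_slot_add, wPair_add]
  · intro y j c x
    rw [BS2_slot_smul, wPair_smul]
  · intro y j x x'
    rw [mlift_slot_add]
  · intro y j c x
    rw [mlift_slot_smul]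
  · intro q
    rw [mlift_single, show (fun i => Finsupp.single (q i) (1:K))
        = fun i => tens (Finsupp.single ((q i).1) 1) (Finsupp.single ((q i).2) 1) from
      funext fun i => by rw [tens_single_single, one_mul],
      BS2_tens, wPair_tens]

theorem claimL (Y : Fin n → (NTree n × NTree n) →₀ K) :
    expandL (mlift (K := K) (PhiQ (K := K)) Y)
      = mlift (K := K) (PhiPsi (K := K)) (fun i => expandL (Y i)) := by
  refine multilinear_ext
    (H₁ := fun Y => expandL (mlift (K := K) (PhiQ (K := K)) Y))
    (H₂ := fun Y => mlift (K := K) (PhiPsi (K := K)) (fun i => expandL (Y i)))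
    ?_ ?_ ?_ ?_ ?_ Y
  · intro y j x x'
    rw [mlift_slot_add, expandL_add]
  · intro y j c x
    rw [mlift_slot_smul, expandL_smul]
  · intro y j x x'
    rw [update_apply_comp (fun _ z => expandL z), expandL_add, mlift_slot_add,
      update_apply_comp (fun _ z => expandL z), update_apply_comp (fun _ z => expandL z)]
  · intro y j c x
    rw [update_apply_comp (fun _ z => expandL z), expandL_smul, mlift_slot_smul,
      update_apply_comp (fun _ z => expandL z)]
  · intro p
    dsimp only
    rw [mlift_single, PhiQ_eq_tens, expandL_tens, bigStar_eq_BS, deltaF_BS]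
    rw [show (fun i => deltaF (K := K) (Finsupp.single ((p i).1) 1))
        = fun i => deltaN (K := K) ((p i).1) from
      funext fun i => by rw [deltaF_single, one_smul]]
    rw [wPair_BS2]
    rw [show (fun i => expandL (K := K) (Finsupp.single (p i) 1))
        = fun i => Finsupp.linearCombination K
            (fun q : NTree n × NTree n => Finsupp.single (q.1, q.2, (p i).2) (1:K))
            (deltaN ((p i).1)) from funext fun i => expandL_as_lc (p i)]
    rw [mlift_comp (K := K) (PhiPsi (K := K))
      (r := fun i (q : NTree n × NTree n) => Finsupp.single (q.1, q.2, (p i).2) (1:K))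
      (y := fun i => deltaN ((p i).1))]
    refine (mlift_congrΦ _ fun g => ?_).symm
    rw [mlift_single]
    rfl

theorem claimR (Y : Fin n → (NTree n × NTree n) →₀ K) :
    mlift (K := K) (fun g : Fin n → NTree n × NTree n =>
        t3L (bigStar fun i => (g i).1)
          (mlift (K := K) (PhiQ (K := K)) (fun i => deltaN ((g i).2)))) Y
      = mlift (K := K) (PhiPsi (K := K)) (fun i => expandR (Y i)) := by
  refine multilinear_ext
    (H₁ := fun Y => mlift (K := K) (fun g : Fin n → NTree n × NTree n =>
      t3L (bigStar fun i => (g i).1)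
        (mlift (K := K) (PhiQ (K := K)) (fun i => deltaN ((g i).2)))) Y)
    (H₂ := fun Y => mlift (K := K) (PhiPsi (K := K)) (fun i => expandR (Y i)))
    ?_ ?_ ?_ ?_ ?_ Y
  · intro y j x x'
    rw [mlift_slot_add]
  · intro y j c x
    rw [mlift_slot_smul]
  · intro y j x x'
    rw [update_apply_comp (fun _ z => expandR z), expandR_add, mlift_slot_add,
      update_apply_comp (fun _ z => expandR z), update_apply_comp (fun _ z => expandR z)]
  · intro y j c x
    rw [update_apply_comp (fun _ z => expandR z), expandR_smul, mlift_slot_smul,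
      update_apply_comp (fun _ z => expandR z)]
  · intro p
    dsimp only
    rw [mlift_single]
    rw [show t3L (bigStar fun i => ((p i).1))
          (mlift (K := K) (PhiQ (K := K)) (fun i => deltaN ((p i).2)))
        = t3LR (bigStar fun i => ((p i).1))
            (mlift (K := K) (PhiQ (K := K)) (fun i => deltaN ((p i).2))) from rfl]
    rw [mlift_map]
    rw [show (fun i => expandR (K := K) (Finsupp.single (p i) 1))
        = fun i => Finsupp.linearCombination K
            (fun q : NTree n × NTree n => Finsupp.single ((p i).1, q.1, q.2) (1:K))
            (deltaN ((p i).2)) from funext fun i => expandR_as_lc (p i)]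
    rw [mlift_comp (K := K) (PhiPsi (K := K))
      (r := fun i (q : NTree n × NTree n) => Finsupp.single ((p i).1, q.1, q.2) (1:K))
      (y := fun i => deltaN ((p i).2))]
    refine mlift_congrΦ _ fun q => ?_
    rw [show (t3LR (K := K) (bigStar fun i => ((p i).1))) (PhiQ (K := K) q)
        = t3L (bigStar fun i => ((p i).1)) (PhiQ (K := K) q) from rfl]
    rw [PhiQ_eq_tens, t3L_tens, mlift_single]
    rw [show PhiPsi (K := K) (fun i => ((p i).1, (q i).1, (q i).2))
        = t3R (BS fun i => Finsupp.single ((p i).1) 1)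
            (BS fun i => Finsupp.single ((q i).1) 1) (NTree.node fun i => (q i).2)
      from rfl]
    rw [bigStar_eq_BS, bigStar_eq_BS]

theorem t3L_pair_leaf (X : NTree n →₀ K) (w : NTree n) :
    t3L X (Finsupp.single (w, NTree.leaf) 1) = t3R X (Finsupp.single w 1) NTree.leaf := by
  rw [t3L, t3R]
  refine Finsupp.sum_congr fun a _ => ?_
  rw [Finsupp.sum_single_index (by simp), Finsupp.sum_single_index (by simp)]

theorem coassoc (t : NTree n) : expandL (K := K) (deltaN t) = expandR (deltaN t) := by
  induction t with
  | leaf =>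
      rw [deltaN_leaf, expandL_single, expandR_single]
      dsimp only
      rw [deltaN_leaf, Finsupp.sum_single_index (by simp),
        Finsupp.sum_single_index (by simp)]
  | node f ih =>
      have hmain : expandL (mlift (K := K) (PhiQ (K := K)) fun i => deltaN (f i))
          = mlift (K := K) (fun g : Fin n → NTree n × NTree n =>
              t3L (bigStar fun i => (g i).1)
                (mlift (K := K) (PhiQ (K := K)) fun i => deltaN ((g i).2)))
              fun i => deltaN (f i) := by
        rw [claimL, show (fun i => expandL (K := K) (deltaN (f i)))
            = fun i => expandR (K := K) (deltaN (f i)) from funext fun i => ih i,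
          ← claimR]
      have hB : wPair (mlift (K := K) (PhiQ (K := K)) fun i => deltaN (f i)) NTree.leaf
          = mlift (K := K) (fun g : Fin n → NTree n × NTree n =>
              t3L (bigStar fun i => (g i).1)
                (Finsupp.single ((NTree.node fun i => (g i).2), NTree.leaf) (1:K)))
              fun i => deltaN (f i) := by
        rw [show wPair (mlift (K := K) (PhiQ (K := K)) fun i => deltaN (f i)) NTree.leaf
            = wPairL NTree.leaf (mlift (K := K) (PhiQ (K := K)) fun i => deltaN (f i))
            from rfl, mlift_map]
        refine mlift_congrΦ _ fun g => ?_
        rw [show wPairL (K := K) NTree.leaf (PhiQ (K := K) g)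
            = wPair (PhiQ (K := K) g) NTree.leaf from rfl,
          PhiQ_eq_tens, wPair_tens, ← t3L_pair_leaf]
      have hR : expandR (mlift (K := K) (PhiQ (K := K)) fun i => deltaN (f i))
          = (mlift (K := K) (fun g : Fin n → NTree n × NTree n =>
              t3L (bigStar fun i => (g i).1)
                (mlift (K := K) (PhiQ (K := K)) fun i => deltaN ((g i).2)))
              fun i => deltaN (f i))
            + mlift (K := K) (fun g : Fin n → NTree n × NTree n =>
                t3L (bigStar fun i => (g i).1)
                  (Finsupp.single ((NTree.node fun i => (g i).2), NTree.leaf) (1:K)))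
                fun i => deltaN (f i) := by
        rw [show expandR (mlift (K := K) (PhiQ (K := K)) fun i => deltaN (f i))
            = expandRL (mlift (K := K) (PhiQ (K := K)) fun i => deltaN (f i)) from rfl,
          mlift_map, ← mlift_addPhi]
        refine mlift_congrΦ _ fun g => ?_
        rw [show expandRL (PhiQ (K := K) g) = expandR (PhiQ (K := K) g) from rfl,
          PhiQ_eq_tens, expandR_tens, deltaN_node, t3L_add_right]
      have e1 : expandL (K := K) (Finsupp.single ((NTree.node f), NTree.leaf) 1)
          = wPair (deltaN (NTree.node f)) NTree.leaf := by
        rw [expandL_single, wPair]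
        exact Finsupp.sum_congr fun q _ => by rw [one_mul]
      have e2 : expandR (K := K) (Finsupp.single ((NTree.node f), NTree.leaf) 1)
          = Finsupp.single (NTree.node f, NTree.leaf, NTree.leaf) 1 := by
        rw [expandR_single]
        dsimp only
        rw [deltaN_leaf, Finsupp.sum_single_index (by simp)]
        simp
      rw [deltaN_node, expandL_add, expandR_add, e1, e2, deltaN_node, wPair_add,
        wPair_single, hmain, hB, hR]
      abel

end Coassoc

theorem nary_bialgebra (K : Type*) [Field K] (n : ℕ) [NeZero n] :
    -- `*` is associative with unit `1`
    (∀ x : NTree n →₀ K, star (mTop n) (lBot n) (Finsupp.single NTree.leaf 1) x = x) ∧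
    (∀ x : NTree n →₀ K, star (mTop n) (lBot n) x (Finsupp.single NTree.leaf 1) = x) ∧
    (∀ x y z : NTree n →₀ K,
        star (mTop n) (lBot n) (star (mTop n) (lBot n) x y) z
          = star (mTop n) (lBot n) x (star (mTop n) (lBot n) y z)) ∧
    -- Δ is coassociative
    (∀ t : NTree n, expandL (K := K) (deltaN t) = expandR (deltaN t)) ∧
    -- ε is a counit for Δ
    (∀ t : NTree n,
      ((deltaN t).sum fun p c => (eps (K := K) p.1 * c) • Finsupp.single p.2 (1 : K))
        = Finsupp.single t 1) ∧
    (∀ t : NTree n,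
      ((deltaN t).sum fun p c => (eps (K := K) p.2 * c) • Finsupp.single p.1 (1 : K))
        = Finsupp.single t 1) ∧
    -- Δ is an algebra homomorphism for `*`
    (∀ s t : NTree n,
        deltaF (mulT (mTop n) (lBot n) s t) = starP (K := K) (deltaN s) (deltaN t)) := by
  refine ⟨fun x => one_star _ _ x, fun x => tstar_one _ _ x,
    fun x y z => star_assoc _ _ x y z, fun t => coassoc t, fun t => ?_, fun t => ?_,
    fun s t => hom_main s t⟩
  · rw [EL_eq_sum, counitL]
  · rw [ER_eq_sum, counitR]

end
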